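/- arXiv:math/0410166 — 6 statements merged into one kernel-verified Lean document; each statement's English description precedes it below -/
import Mathlib

section
/- Let ζ̂ be a nonnegative random variable defined on the same probability space as (ζ,V) and let σ : ℝ₊ → [0,1] be a function such that identity (3.2) holds. Then ℙ(ζ̂ ≤ ζ) = 1, ℙ(ζ̂ ≤ t, ζ > t) = σ(t) for every t ∈ ℝ₊, and for every t ∈ ℝ₊ with σ(t) > 0 the conditional distribution of (ζ − t, V) given the event {ζ̂ ≤ t, ζ > t} equals ν_γ × μ. -/
open MeasureTheory ProbabilityTheory Real Set

/-- The exponential distribution on `[0, ∞)` with mean `γ⁻¹` (rate `γ`), as a measure on `ℝ`. -/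
noncomputable def expν (γ : ℝ) : Measure ℝ :=
  MeasureTheory.volume.withDensity
    (fun x => if 0 ≤ x then ENNReal.ofReal (γ * Real.exp (-γ * x)) else 0)

/-!
Taking `u = t` in (3.2) gives `ℙ(ζ̂ ≤ t, ζ ≤ t) = ℙ(ζ ≤ t)`, so each event `{ζ ≤ q < ζ̂}`, `q ∈ ℚ`,
is null and `ζ̂ ≤ ζ` almost surely. Subtracting the cases `u = t` and `u = t + v` shows that the
law of `(ζ - t, V)` restricted to `{ζ̂ ≤ t < ζ}` gives each rectangle `(-∞, v] × A` the mass
`σ(t) ν_γ(-∞, v] μ(A)`. Such rectangles determine a finite measure on `ℝ × S`, so this law is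
`σ(t) • ν_γ × μ`: its total mass is `σ(t)`, and normalising it gives `ν_γ × μ`.
-/

lemma expν_eq_withDensity_exponentialPDF (γ : ℝ) :
    expν γ = volume.withDensity (exponentialPDF γ) := by
  unfold expν
  congr 1
  funext x
  rw [exponentialPDF_eq]
  split_ifs <;> simp [neg_mul]

lemma expν_Iic {γ : ℝ} (hγ : 0 < γ) (v : ℝ) :
    expν γ (Iic v) = ENNReal.ofReal (if 0 ≤ v then 1 - exp (-(γ * v)) else 0) := by
  rw [expν_eq_withDensity_exponentialPDF, withDensity_apply _ measurableSet_Iic,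
    lintegral_exponentialPDF_eq_antiDeriv hγ]

lemma isProbabilityMeasure_expν {γ : ℝ} (hγ : 0 < γ) : IsProbabilityMeasure (expν γ) := by
  constructor
  rw [expν_eq_withDensity_exponentialPDF, withDensity_apply _ MeasurableSet.univ,
    Measure.restrict_univ, lintegral_exponentialPDF_eq_one hγ]

namespace MeasureTheory.Measure

def finiteSpanningSetsInIic (ν : Measure ℝ) [IsFiniteMeasure ν] :
    ν.FiniteSpanningSetsIn (range Iic) where
  set n := Iic n
  set_mem n := ⟨n, rfl⟩
  finite _ := measure_lt_top ν _
  spanning := iUnion_eq_univ_iff.2 fun x => ⟨⌈x⌉₊, mem_Iic.2 (Nat.le_ceil x)⟩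

theorem prod_eq_of_Iic_prod {S : Type*} [MeasurableSpace S] {ν : Measure ℝ} [IsFiniteMeasure ν]
    {μ : Measure S} [SigmaFinite μ] {ρ : Measure (ℝ × S)}
    (h : ∀ v A, MeasurableSet A → ρ (Iic v ×ˢ A) = ν (Iic v) * μ A) : ν.prod μ = ρ :=
  prod_eq_generateFrom ((borel_eq_generateFrom_Iic ℝ).symm.trans BorelSpace.measurable_eq.symm)
    MeasurableSpace.generateFrom_measurableSet isPiSystem_Iic
    MeasurableSpace.isPiSystem_measurableSet ν.finiteSpanningSetsInIic μ.toFiniteSpanningSetsIn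
    (by rintro _ ⟨v, rfl⟩ A hA; exact h v A hA)

end MeasureTheory.Measure

lemma ae_le_of_measure_le_lt_eq_zero {Ω : Type*} [MeasurableSpace Ω] {P : Measure Ω}
    {X Y : Ω → ℝ} (h : ∀ q : ℚ, P {ω | Y ω ≤ q ∧ (q : ℝ) < X ω} = 0) :
    ∀ᵐ ω ∂P, X ω ≤ Y ω := by
  refine ae_iff.2 (measure_mono_null (fun ω hω => ?_) (measure_iUnion_null h))
  obtain ⟨q, hYq, hqX⟩ := exists_rat_btwn (not_le.1 hω)
  exact mem_iUnion.2 ⟨q, hYq.le, hqX⟩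

/-- Identity (3.2). -/
def JointLawIdentity {Ω S : Type*} [MeasurableSpace Ω] [MeasurableSpace S] (P : Measure Ω)
    (μ : Measure S) (γ : ℝ) (ζ : Ω → ℝ) (V : Ω → S) (ζhat : Ω → ℝ) (σ : ℝ → ℝ) : Prop :=
  ∀ t u, 0 ≤ t → 0 ≤ u → ∀ A : Set S, MeasurableSet A →
    P {ω | ζhat ω ≤ t ∧ ζ ω ≤ u ∧ V ω ∈ A} =
      P {ω | ζ ω ≤ min t u ∧ V ω ∈ A} +
        ENNReal.ofReal (σ t * (1 - exp (-γ * max (u - t) 0))) * μ A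

namespace JointLawIdentity

variable {Ω S : Type*} [MeasurableSpace Ω] [MeasurableSpace S] {P : Measure Ω}
  {μ : Measure S} {γ : ℝ} {ζ ζhat : Ω → ℝ} {V : Ω → S} {σ : ℝ → ℝ} {t u : ℝ} {A : Set S}

lemma measure_hat_le_le (h : JointLawIdentity P μ γ ζ V ζhat σ) (ht : 0 ≤ t)
    (hA : MeasurableSet A) :
    P {ω | ζhat ω ≤ t ∧ ζ ω ≤ t ∧ V ω ∈ A} = P {ω | ζ ω ≤ t ∧ V ω ∈ A} := by
  simpa using h t t ht ht A hA

lemma measure_le_lt_hat_eq_zero [IsFiniteMeasure P] (h : JointLawIdentity P μ γ ζ V ζhat σ)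
    (hζm : Measurable ζ) (hζhatm : Measurable ζhat) (hζ0 : ∀ ω, 0 ≤ ζ ω) (q : ℝ) :
    P {ω | ζ ω ≤ q ∧ q < ζhat ω} = 0 := by
  rcases lt_or_ge q 0 with hq | hq
  · exact measure_mono_null (fun ω hω => absurd ((hζ0 ω).trans hω.1) hq.not_ge) measure_empty
  have hdiff : {ω | ζ ω ≤ q ∧ q < ζhat ω} =
      {ω | ζ ω ≤ q} \ {ω | ζhat ω ≤ q ∧ ζ ω ≤ q} := by
    ext ω
    simp only [mem_sdiff, mem_ofPred_eq, not_and, not_le]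
    grind
  have hmeas : MeasurableSet {ω | ζhat ω ≤ q ∧ ζ ω ≤ q} :=
    (hζhatm measurableSet_Iic).inter (hζm measurableSet_Iic)
  have hsmall := h.measure_hat_le_le hq MeasurableSet.univ
  simp only [mem_univ, and_true] at hsmall
  have hsub : {ω | ζhat ω ≤ q ∧ ζ ω ≤ q} ⊆ {ω | ζ ω ≤ q} := fun ω hω => hω.2
  rw [hdiff, measure_sdiff hsub hmeas.nullMeasurableSet (measure_ne_top P _), hsmall, tsub_self]

lemma measure_hat_le_lt_le [IsFiniteMeasure P] (h : JointLawIdentity P μ γ ζ V ζhat σ)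
    (hζm : Measurable ζ) (hζhatm : Measurable ζhat) (hVm : Measurable V) (ht : 0 ≤ t)
    (htu : t ≤ u) (hA : MeasurableSet A) :
    P {ω | ζhat ω ≤ t ∧ t < ζ ω ∧ ζ ω ≤ u ∧ V ω ∈ A} =
      ENNReal.ofReal (σ t * (1 - exp (-γ * (u - t)))) * μ A := by
  have hdiff : {ω | ζhat ω ≤ t ∧ t < ζ ω ∧ ζ ω ≤ u ∧ V ω ∈ A} =
      {ω | ζhat ω ≤ t ∧ ζ ω ≤ u ∧ V ω ∈ A} \ {ω | ζhat ω ≤ t ∧ ζ ω ≤ t ∧ V ω ∈ A} := by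
    ext ω
    simp only [mem_sdiff, mem_ofPred_eq, not_and]
    grind
  have hmeas : MeasurableSet {ω | ζhat ω ≤ t ∧ ζ ω ≤ t ∧ V ω ∈ A} :=
    (hζhatm measurableSet_Iic).inter ((hζm measurableSet_Iic).inter (hVm hA))
  have hsub : {ω | ζhat ω ≤ t ∧ ζ ω ≤ t ∧ V ω ∈ A} ⊆ {ω | ζhat ω ≤ t ∧ ζ ω ≤ u ∧ V ω ∈ A} :=
    fun ω ⟨h₁, h₂, h₃⟩ => ⟨h₁, h₂.trans htu, h₃⟩
  rw [hdiff, measure_sdiff hsub hmeas.nullMeasurableSet (measure_ne_top P _),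
    h t u ht (ht.trans htu) A hA, h.measure_hat_le_le ht hA, min_eq_left htu,
    max_eq_left (sub_nonneg.2 htu), ENNReal.add_sub_cancel_left (measure_ne_top P _)]

lemma map_restrict_eq [IsFiniteMeasure P] [SigmaFinite μ]
    (h : JointLawIdentity P μ γ ζ V ζhat σ) (hγ : 0 < γ) (hζm : Measurable ζ)
    (hζhatm : Measurable ζhat) (hVm : Measurable V) (ht : 0 ≤ t) (hσ : 0 ≤ σ t) :
    (P.restrict {ω | ζhat ω ≤ t ∧ t < ζ ω}).map (fun ω => (ζ ω - t, V ω)) =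
      ENNReal.ofReal (σ t) • (expν γ).prod μ := by
  have := isProbabilityMeasure_expν hγ
  have := (expν γ).smul_finite (c := ENNReal.ofReal (σ t)) ENNReal.ofReal_ne_top
  have hf : Measurable fun ω => (ζ ω - t, V ω) := (hζm.sub_const t).prodMk hVm
  rw [← Measure.prod_smul_left]
  refine (Measure.prod_eq_of_Iic_prod fun v A hA => ?_).symm
  rw [Measure.map_apply hf (measurableSet_Iic.prod hA),
    Measure.restrict_apply (hf (measurableSet_Iic.prod hA)), Measure.smul_apply, smul_eq_mul,
    expν_Iic hγ]
  rcases le_or_gt 0 v with hv | hv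
  · have hslab : (fun ω => (ζ ω - t, V ω)) ⁻¹' (Iic v ×ˢ A) ∩ {ω | ζhat ω ≤ t ∧ t < ζ ω} =
        {ω | ζhat ω ≤ t ∧ t < ζ ω ∧ ζ ω ≤ t + v ∧ V ω ∈ A} := by
      ext ω
      simp only [mem_inter_iff, mem_preimage, mem_prod, mem_Iic, mem_ofPred_eq]
      grind
    rw [hslab, h.measure_hat_le_lt_le hζm hζhatm hVm ht (le_add_of_nonneg_right hv) hA,
      if_pos hv, ENNReal.ofReal_mul hσ, add_sub_cancel_left, neg_mul]
  · have hempty :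
        (fun ω => (ζ ω - t, V ω)) ⁻¹' (Iic v ×ˢ A) ∩ {ω | ζhat ω ≤ t ∧ t < ζ ω} = ∅ := by
      ext ω
      simp only [mem_inter_iff, mem_preimage, mem_prod, mem_Iic, mem_ofPred_eq,
        mem_empty_iff_false, iff_false]
      grind
    rw [hempty, measure_empty, if_neg hv.not_ge, ENNReal.ofReal_zero, mul_zero, zero_mul]

lemma measure_hat_le_lt [IsFiniteMeasure P] [IsProbabilityMeasure μ]
    (h : JointLawIdentity P μ γ ζ V ζhat σ) (hγ : 0 < γ) (hζm : Measurable ζ)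
    (hζhatm : Measurable ζhat) (hVm : Measurable V) (ht : 0 ≤ t) (hσ : 0 ≤ σ t) :
    P {ω | ζhat ω ≤ t ∧ t < ζ ω} = ENNReal.ofReal (σ t) := by
  have := isProbabilityMeasure_expν hγ
  have hlaw := congrArg (· univ) (h.map_restrict_eq hγ hζm hζhatm hVm ht hσ)
  simpa [Measure.map_apply ((hζm.sub_const t).prodMk hVm) MeasurableSet.univ] using hlaw

end JointLawIdentity

theorem stmt_1_general {Ω : Type*} [MeasurableSpace Ω] (P : Measure Ω) [IsProbabilityMeasure P]
    {S : Type*} [MeasurableSpace S] (μ : Measure S) [IsProbabilityMeasure μ]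
    (γ : ℝ) (hγ : 0 < γ)
    (ζ : Ω → ℝ) (V : Ω → S) (hζm : Measurable ζ) (hVm : Measurable V)
    (hζ0 : ∀ ω, 0 ≤ ζ ω)
    (ζhat : Ω → ℝ) (hζhatm : Measurable ζhat)
    (σ : ℝ → ℝ) (hσ01 : ∀ t, 0 ≤ t → σ t ∈ Set.Icc (0 : ℝ) 1)
    (h32 : ∀ t u, 0 ≤ t → 0 ≤ u → ∀ A : Set S, MeasurableSet A →
      P {ω | ζhat ω ≤ t ∧ ζ ω ≤ u ∧ V ω ∈ A} =
        P {ω | ζ ω ≤ min t u ∧ V ω ∈ A} +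
          ENNReal.ofReal (σ t * (1 - Real.exp (-γ * max (u - t) 0))) * μ A) :
    P {ω | ζhat ω ≤ ζ ω} = 1 ∧
    (∀ t, 0 ≤ t → P {ω | ζhat ω ≤ t ∧ t < ζ ω} = ENNReal.ofReal (σ t)) ∧
    (∀ t, 0 ≤ t → 0 < σ t →
      Measure.map (fun ω => (ζ ω - t, V ω)) (P[|{ω | ζhat ω ≤ t ∧ t < ζ ω}]) =
        (expν γ).prod μ) := by
  have h : JointLawIdentity P μ γ ζ V ζhat σ := h32
  have hmass t (ht : 0 ≤ t) := h.measure_hat_le_lt hγ hζm hζhatm hVm ht (hσ01 t ht).1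
  refine ⟨?_, hmass, fun t ht hσt => ?_⟩
  · have hae : ∀ᵐ ω ∂P, ζhat ω ≤ ζ ω :=
      ae_le_of_measure_le_lt_eq_zero fun q => h.measure_le_lt_hat_eq_zero hζm hζhatm hζ0 q
    rw [(ae_iff_measure_eq (measurableSet_le hζhatm hζm).nullMeasurableSet).1 hae, measure_univ]
  · rw [ProbabilityTheory.cond, Measure.map_smul,
      h.map_restrict_eq hγ hζm hζhatm hVm ht (hσ01 t ht).1, hmass t ht, smul_smul,
      ENNReal.inv_mul_cancel (by simpa using hσt) ENNReal.ofReal_ne_top, one_smul]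

/-- Theorem 3.1 (properties part): if a nonnegative `ζ̂` and `σ : ℝ₊ → [0,1]` satisfy
identity (3.2), then `ℙ(ζ̂ ≤ ζ) = 1`, `ℙ(ζ̂ ≤ t, ζ > t) = σ(t)`, and for `t` with `σ(t) > 0`
the conditional law of `(ζ − t, V)` given `{ζ̂ ≤ t, ζ > t}` is `ν_γ × μ`. -/
theorem stmt_1 {Ω : Type*} [MeasurableSpace Ω] (P : Measure Ω) [IsProbabilityMeasure P]
    {S : Type*} [MeasurableSpace S] (μ : Measure S) [IsProbabilityMeasure μ]
    (γ : ℝ) (hγ : 0 < γ)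
    (ζ : Ω → ℝ) (V : Ω → S) (hζm : Measurable ζ) (hVm : Measurable V)
    (hζ0 : ∀ ω, 0 ≤ ζ ω)
    (ζhat : Ω → ℝ) (hζhatm : Measurable ζhat) (hζhat0 : ∀ ω, 0 ≤ ζhat ω)
    (σ : ℝ → ℝ) (hσ01 : ∀ t, 0 ≤ t → σ t ∈ Set.Icc (0 : ℝ) 1)
    (h32 : ∀ t u, 0 ≤ t → 0 ≤ u → ∀ A : Set S, MeasurableSet A →
      P {ω | ζhat ω ≤ t ∧ ζ ω ≤ u ∧ V ω ∈ A} =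
        P {ω | ζ ω ≤ min t u ∧ V ω ∈ A} +
          ENNReal.ofReal (σ t * (1 - Real.exp (-γ * max (u - t) 0))) * μ A) :
    P {ω | ζhat ω ≤ ζ ω} = 1 ∧
    (∀ t, 0 ≤ t → P {ω | ζhat ω ≤ t ∧ t < ζ ω} = ENNReal.ofReal (σ t)) ∧
    (∀ t, 0 ≤ t → 0 < σ t →
      Measure.map (fun ω => (ζ ω - t, V ω)) (P[|{ω | ζhat ω ≤ t ∧ t < ζ ω}]) =
        (expν γ).prod μ) :=
  stmt_1_general P μ γ hγ ζ V hζm hVm hζ0 ζhat hζhatm σ hσ01 h32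
end

section
/- If ζ̂ is a strong memoryless time for (ζ,V) with parameters (γ,μ), then the function σ(t) := ℙ(ζ̂ ≤ t, ζ > t) satisfies condition (3.1), and the function G(t) = σ(t)e^{γt} is nondecreasing and right-continuous on ℝ₊. -/
open MeasureTheory ProbabilityTheory Real Set

/-!
On `{ζ̂ ≤ s < ζ}` the overshoot `ζ - s` is exponential with rate `γ`, so for `s ≤ t`
`ℙ(ζ̂ ≤ s, ζ > t) = σ(s) e^{-γ(t-s)}`; as `{ζ̂ ≤ s, ζ > t} ⊆ {ζ̂ ≤ t < ζ}`, this gives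
`σ(s) e^{γs} ≤ σ(t) e^{γt}`. For `u ↓ t`, `G(u)` is squeezed between `G(t)` and
`ℙ(ζ̂ ≤ u, ζ > t) e^{γu}`, which tends to `G(t)` by continuity of `ℙ` from above.
Condition (3.1) is the conditional law of `(ζ - t, V)` in the form
`ℙ({ζ̂ ≤ t < ζ} ∩ {(ζ - t, V) ∈ C}) = σ(t) (ν_γ × μ)(C)`.
-/

open Filter Topology

lemma expν_eq_expMeasure (γ : ℝ) : expν γ = expMeasure γ := by
  rw [expν, expMeasure, gammaMeasure]
  congr 1
  funext x
  rw [show gammaPDF 1 γ x = exponentialPDF γ x from rfl, exponentialPDF_eq]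
  split_ifs <;> simp

lemma expν_Ioi {γ a : ℝ} (hγ : 0 < γ) (ha : 0 ≤ a) :
    expν γ (Ioi a) = ENNReal.ofReal (exp (-(γ * a))) := by
  have := isProbabilityMeasure_expMeasure hγ
  have hexp_le_one : exp (-(γ * a)) ≤ 1 := exp_le_one_iff.2 (neg_nonpos.2 (mul_nonneg hγ.le ha))
  rw [expν_eq_expMeasure, ← compl_Iic, prob_compl_eq_one_sub measurableSet_Iic, ← ofReal_cdf,
    cdf_expMeasure_eq hγ, if_pos ha, ← ENNReal.ofReal_one,
    ← ENNReal.ofReal_sub _ (sub_nonneg.2 hexp_le_one), sub_sub_cancel]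

section ConditionalLaw

variable {Ω α : Type*} [MeasurableSpace Ω] [MeasurableSpace α] {P : Measure Ω}
  [IsFiniteMeasure P] {A : Set Ω} {f : Ω → α} {ν : Measure α}

lemma measure_inter_preimage_eq_mul_of_map_cond (hf : Measurable f)
    (hcond : 0 < P A → (P[|A]).map f = ν) {C : Set α} (hC : MeasurableSet C) :
    P (A ∩ f ⁻¹' C) = P A * ν C := by
  rcases eq_zero_or_pos (P A) with h0 | hpos
  · rw [h0, zero_mul]
    exact measure_mono_null inter_subset_left h0
  · rw [← hcond hpos, Measure.map_apply hf hC, cond_apply' (hf hC), ← mul_assoc,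
      ENNReal.mul_inv_cancel hpos.ne' (measure_ne_top _ _), one_mul]

lemma mul_le_measure_preimage_of_map_cond (hf : Measurable f)
    (hcond : 0 < P A → (P[|A]).map f = ν) {C : Set α} (hC : MeasurableSet C) :
    P A * ν C ≤ P (f ⁻¹' C) :=
  measure_inter_preimage_eq_mul_of_map_cond hf hcond hC ▸ measure_mono inter_subset_right

end ConditionalLaw

lemma continuousWithinAt_Ici_of_squeeze {g h : ℝ → ℝ} {t : ℝ} (hg : ∀ u ∈ Ioi t, g t ≤ g u)
    (hgh : ∀ u ∈ Ioi t, g u ≤ h u) (hh : Tendsto h (𝓝[>] t) (𝓝 (g t))) :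
    ContinuousWithinAt g (Ici t) t :=
  continuousWithinAt_Ioi_iff_Ici.1 <| tendsto_of_tendsto_of_tendsto_of_le_of_le' tendsto_const_nhds
    hh (eventually_nhdsWithin_of_forall hg) (eventually_nhdsWithin_of_forall hgh)

def leLtSet {Ω : Type*} (X Y : Ω → ℝ) (s t : ℝ) : Set Ω := {ω | X ω ≤ s ∧ t < Y ω}

lemma leLtSet_mono {Ω : Type*} {X Y : Ω → ℝ} {s s' t t' : ℝ} (hs : s ≤ s') (ht : t' ≤ t) :
    leLtSet X Y s t ⊆ leLtSet X Y s' t' :=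
  fun _ h => ⟨h.1.trans hs, ht.trans_lt h.2⟩

section Survival

variable {Ω : Type*} [MeasurableSpace Ω] {P : Measure Ω} [IsFiniteMeasure P] {ζhat ζ : Ω → ℝ}

lemma measure_leLtSet_eq_mul {γ s t : ℝ} (hζ : Measurable ζ) (hγ : 0 < γ) (hst : s ≤ t)
    (hcond : 0 < P (leLtSet ζhat ζ s s) →
      (P[|leLtSet ζhat ζ s s]).map (fun ω => ζ ω - s) = expν γ) :
    P (leLtSet ζhat ζ s t) = P (leLtSet ζhat ζ s s) * ENNReal.ofReal (exp (-(γ * (t - s)))) := by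
  have hset : leLtSet ζhat ζ s s ∩ (fun ω => ζ ω - s) ⁻¹' Ioi (t - s) = leLtSet ζhat ζ s t := by
    ext ω
    simp only [leLtSet, mem_inter_iff, mem_ofPred_eq, mem_preimage, mem_Ioi]
    constructor
    · rintro ⟨⟨hle, -⟩, hlt⟩
      exact ⟨hle, by linarith⟩
    · rintro ⟨hle, hlt⟩
      exact ⟨⟨hle, by linarith⟩, by linarith⟩
  rw [← hset, measure_inter_preimage_eq_mul_of_map_cond (hζ.sub_const s) hcond measurableSet_Ioi,
    expν_Ioi hγ (sub_nonneg.2 hst)]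

lemma toReal_measure_leLtSet_mul_exp_le {γ s t : ℝ} (hζ : Measurable ζ) (hγ : 0 < γ)
    (hst : s ≤ t)
    (hcond : 0 < P (leLtSet ζhat ζ s s) →
      (P[|leLtSet ζhat ζ s s]).map (fun ω => ζ ω - s) = expν γ) :
    (P (leLtSet ζhat ζ s s)).toReal * exp (γ * s) ≤
      (P (leLtSet ζhat ζ t t)).toReal * exp (γ * t) := by
  have hsurv : (P (leLtSet ζhat ζ s s)).toReal * exp (-(γ * (t - s))) ≤
      (P (leLtSet ζhat ζ t t)).toReal := by
    have hsub : P (leLtSet ζhat ζ s t) ≤ P (leLtSet ζhat ζ t t) :=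
      measure_mono (leLtSet_mono hst le_rfl)
    have := ENNReal.toReal_mono (measure_ne_top _ _) hsub
    rwa [measure_leLtSet_eq_mul hζ hγ hst hcond, ENNReal.toReal_mul,
      ENNReal.toReal_ofReal (exp_nonneg _)] at this
  calc (P (leLtSet ζhat ζ s s)).toReal * exp (γ * s)
      = (P (leLtSet ζhat ζ s s)).toReal * exp (-(γ * (t - s))) * exp (γ * t) := by
        rw [mul_assoc, ← exp_add]; ring_nf
    _ ≤ (P (leLtSet ζhat ζ t t)).toReal * exp (γ * t) := by gcongr

lemma tendsto_measure_leLtSet_nhdsGT (hζhat : Measurable ζhat) (hζ : Measurable ζ) (a t : ℝ) :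
    Tendsto (fun u => P (leLtSet ζhat ζ u t)) (𝓝[>] a) (𝓝 (P (leLtSet ζhat ζ a t))) := by
  have hinter : ⋂ r > a, leLtSet ζhat ζ r t = leLtSet ζhat ζ a t := by
    ext ω
    simp only [leLtSet, mem_iInter, mem_ofPred_eq]
    exact ⟨fun h => ⟨le_of_forall_gt_imp_ge_of_dense fun r hr => (h r hr).1,
      (h (a + 1) (lt_add_one a)).2⟩, fun ⟨hle, hlt⟩ r hr => ⟨hle.trans hr.le, hlt⟩⟩
  rw [← hinter]
  exact tendsto_measure_biInter_gt
    (fun r _ => ((measurableSet_le hζhat measurable_const).inter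
      (measurableSet_lt measurable_const hζ)).nullMeasurableSet)
    (fun _ _ _ hij => leLtSet_mono hij le_rfl) ⟨a + 1, lt_add_one a, measure_ne_top _ _⟩

end Survival

theorem stmt_2_general {Ω : Type*} [MeasurableSpace Ω] (P : Measure Ω) [IsProbabilityMeasure P]
    {S : Type*} [MeasurableSpace S] (μ : Measure S) [IsProbabilityMeasure μ]
    (γ : ℝ) (hγ : 0 < γ)
    (ζ : Ω → ℝ) (V : Ω → S) (hζm : Measurable ζ) (hVm : Measurable V)
    (ζhat : Ω → ℝ) (hζhatm : Measurable ζhat)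
    (hcond : ∀ t, 0 ≤ t → 0 < P {ω | ζhat ω ≤ t ∧ t < ζ ω} →
      Measure.map (fun ω => (ζ ω - t, V ω)) (P[|{ω | ζhat ω ≤ t ∧ t < ζ ω}]) =
        (expν γ).prod μ) :
    (∀ t, 0 ≤ t → ∀ C : Set (ℝ × S), MeasurableSet C →
      0 < ((expν γ).prod μ) C →
      ENNReal.ofReal ((P {ω | ζhat ω ≤ t ∧ t < ζ ω}).toReal) ≤
        P ((fun ω => (ζ ω - t, V ω)) ⁻¹' C) / ((expν γ).prod μ) C) ∧
    (∀ s t, 0 ≤ s → s ≤ t →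
      (P {ω | ζhat ω ≤ s ∧ s < ζ ω}).toReal * Real.exp (γ * s) ≤
        (P {ω | ζhat ω ≤ t ∧ t < ζ ω}).toReal * Real.exp (γ * t)) ∧
    (∀ t, 0 ≤ t →
      ContinuousWithinAt
        (fun u => (P {ω | ζhat ω ≤ u ∧ u < ζ ω}).toReal * Real.exp (γ * u))
        (Set.Ici t) t) := by
  have hmarg : ∀ t, 0 ≤ t → 0 < P (leLtSet ζhat ζ t t) →
      (P[|leLtSet ζhat ζ t t]).map (fun ω => ζ ω - t) = expν γ := fun t ht hpos =>
    (Measure.fst_map_prodMk hVm).symm.trans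
      ((congrArg Measure.fst (hcond t ht hpos)).trans Measure.fst_prod)
  have hmono : ∀ s t, 0 ≤ s → s ≤ t →
      (P (leLtSet ζhat ζ s s)).toReal * exp (γ * s) ≤
        (P (leLtSet ζhat ζ t t)).toReal * exp (γ * t) := fun s t hs hst =>
    toReal_measure_leLtSet_mul_exp_le hζm hγ hst (hmarg s hs)
  refine ⟨fun t ht C hC hCpos => ?_, hmono, fun t ht => ?_⟩
  · rw [ENNReal.ofReal_toReal (measure_ne_top _ _),
      ENNReal.le_div_iff_mul_le (Or.inl hCpos.ne') (Or.inr (measure_ne_top _ _))]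
    exact mul_le_measure_preimage_of_map_cond ((hζm.sub_const t).prodMk hVm) (hcond t ht) hC
  · refine continuousWithinAt_Ici_of_squeeze (h := fun u => (P (leLtSet ζhat ζ u t)).toReal *
      exp (γ * u)) (fun u hu => hmono t u ht (le_of_lt hu)) (fun u hu => ?_) ?_
    · gcongr
      · exact measure_ne_top _ _
      · exact leLtSet_mono le_rfl (le_of_lt hu)
    · exact ((ENNReal.tendsto_toReal (measure_ne_top _ _)).comp
        (tendsto_measure_leLtSet_nhdsGT hζhatm hζm t t)).mul
        ((continuous_exp.comp (continuous_const.mul continuous_id)).continuousWithinAt)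

/-- Theorem 3.1 (converse part): if `ζ̂` is a strong memoryless time for `(ζ, V)` with
parameters `(γ, μ)`, then `σ(t) := ℙ(ζ̂ ≤ t, ζ > t)` satisfies condition (3.1), and
`G(t) = σ(t)e^{γt}` is nondecreasing and right-continuous on `ℝ₊`. -/
theorem stmt_2 {Ω : Type*} [MeasurableSpace Ω] (P : Measure Ω) [IsProbabilityMeasure P]
    {S : Type*} [MeasurableSpace S] (μ : Measure S) [IsProbabilityMeasure μ]
    (γ : ℝ) (hγ : 0 < γ)
    (ζ : Ω → ℝ) (V : Ω → S) (hζm : Measurable ζ) (hVm : Measurable V)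
    (hζ0 : ∀ ω, 0 ≤ ζ ω)
    (ζhat : Ω → ℝ) (hζhatm : Measurable ζhat) (hζhat0 : ∀ ω, 0 ≤ ζhat ω)
    (hle : P {ω | ζhat ω ≤ ζ ω} = 1)
    (hcond : ∀ t, 0 ≤ t → 0 < P {ω | ζhat ω ≤ t ∧ t < ζ ω} →
      Measure.map (fun ω => (ζ ω - t, V ω)) (P[|{ω | ζhat ω ≤ t ∧ t < ζ ω}]) =
        (expν γ).prod μ) :
    (∀ t, 0 ≤ t → ∀ C : Set (ℝ × S), MeasurableSet C →
      0 < ((expν γ).prod μ) C →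
      ENNReal.ofReal ((P {ω | ζhat ω ≤ t ∧ t < ζ ω}).toReal) ≤
        P ((fun ω => (ζ ω - t, V ω)) ⁻¹' C) / ((expν γ).prod μ) C) ∧
    (∀ s t, 0 ≤ s → s ≤ t →
      (P {ω | ζhat ω ≤ s ∧ s < ζ ω}).toReal * Real.exp (γ * s) ≤
        (P {ω | ζhat ω ≤ t ∧ t < ζ ω}).toReal * Real.exp (γ * t)) ∧
    (∀ t, 0 ≤ t →
      ContinuousWithinAt
        (fun u => (P {ω | ζhat ω ≤ u ∧ u < ζ ω}).toReal * Real.exp (γ * u))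
        (Set.Ici t) t) :=
  stmt_2_general P μ γ hγ ζ V hζm hVm ζhat hζhatm hcond
end

section
/- Let ζ̂ be a nonnegative random variable defined on the same probability space as (ζ,V) and let σ : ℝ₊ → [0,1] be a function such that identity (3.2) holds and such that G(t) = σ(t)e^{γt} is nondecreasing on ℝ₊. Then for all t, u ∈ ℝ₊ and A ∈ 𝒮, ℙ(ζ̂ ∈ (0,t], 0 < ζ − ζ̂ ≤ u, V ∈ A) = μ(A)(1 − e^{−γu})(σ(t) − σ(0) + γ∫₀ᵗ σ(x) dx). -/
open MeasureTheory ProbabilityTheory Real Set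

open Filter Topology

/-!
On `{V ∈ A}`, identity (3.2) pins down the joint law `ρ` of `(ζ̂, ζ)` on rectangles lying above the
diagonal: for `s₁ ≤ s₂ ≤ a ≤ b`, `ρ((s₁, s₂] × (a, b]) = μ(A) (e^{-γa} - e^{-γb}) (G(s₂) - G(s₁))`
with `G(s) = σ(s) e^{γs}`. Cutting `(0, t]` into `n` cells of length `δ = t/n`, the event
`{0 < ζ̂ ≤ t, 0 < ζ - ζ̂ ≤ u}` contains a union of such rectangles and is contained in another one
together with the strip `0 < ζ - ζ̂ < δ`, whose mass vanishes as `δ → 0`. Both unions have mass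
`μ(A) (1 - e^{-γ(u + O(δ))})` times a Riemann–Stieltjes sum for `∫_{(0,t]} e^{-γs} dG(s)`, which
summation by parts turns into `σ(t) - σ(0) + (1 - e^{-γδ}) ∑ σ(kδ)`; since `G` is monotone, the
left Riemann sums of `σ = G e^{-γs}` converge, and the sums tend to `σ(t) - σ(0) + γ ∫₀ᵗ σ`.
-/

theorem exp_neg_mul_sub_exp_neg_mul_le {γ a x : ℝ} (hγ : 0 ≤ γ) (ha : 0 ≤ a) (hax : a ≤ x) :
    exp (-γ * a) - exp (-γ * x) ≤ γ * (x - a) := by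
  have hsplit : exp (-γ * x) = exp (-γ * a) * exp (-(γ * (x - a))) := by
    rw [← exp_add]; ring_nf
  have h1 : exp (-γ * a) ≤ 1 := exp_le_one_iff.2 (by nlinarith)
  have h2 := one_sub_le_exp_neg (γ * (x - a))
  have h3 : 0 ≤ γ * (x - a) := mul_nonneg hγ (sub_nonneg.2 hax)
  rw [hsplit]
  nlinarith [exp_pos (-γ * a)]

theorem abs_mul_exp_neg_sub_le {G : ℝ → ℝ} {γ a x : ℝ} (hγ : 0 ≤ γ) (ha : 0 ≤ a)
    (hax : a ≤ x) (hG : G a ≤ G x) :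
    |G x * exp (-γ * x) - G a * exp (-γ * a)| ≤ G x - G a + γ * (x - a) * |G a| := by
  have hdecomp : G x * exp (-γ * x) - G a * exp (-γ * a)
      = (G x - G a) * exp (-γ * x) - G a * (exp (-γ * a) - exp (-γ * x)) := by ring
  have hexp : exp (-γ * x) ≤ 1 := exp_le_one_iff.2 (by nlinarith)
  have hmono : exp (-γ * x) ≤ exp (-γ * a) := exp_le_exp.2 (by nlinarith)
  rw [hdecomp]
  refine (abs_sub _ _).trans (add_le_add ?_ ?_)
  · rw [abs_of_nonneg (mul_nonneg (sub_nonneg.2 hG) (exp_pos _).le)]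
    exact mul_le_of_le_one_right (sub_nonneg.2 hG) hexp
  · rw [abs_mul, abs_of_nonneg (sub_nonneg.2 hmono), mul_comm]
    exact mul_le_mul_of_nonneg_right (exp_neg_mul_sub_exp_neg_mul_le hγ ha hax) (abs_nonneg _)

theorem MonotoneOn.abs_mul_exp_neg_sub_le {G : ℝ → ℝ} {γ t a x b : ℝ}
    (hG : MonotoneOn G (Icc 0 t)) (hγ : 0 ≤ γ) (ha : 0 ≤ a) (hax : a ≤ x) (hxb : x ≤ b)
    (hbt : b ≤ t) :
    |G x * exp (-γ * x) - G a * exp (-γ * a)| ≤ G b - G a + γ * (b - a) * (|G 0| + |G t|) := by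
  have ht : 0 ≤ t := ha.trans (hax.trans (hxb.trans hbt))
  have ha' : a ∈ Icc 0 t := ⟨ha, (hax.trans hxb).trans hbt⟩
  have hx' : x ∈ Icc 0 t := ⟨ha.trans hax, hxb.trans hbt⟩
  have hb' : b ∈ Icc 0 t := ⟨(ha.trans hax).trans hxb, hbt⟩
  have hGa : |G a| ≤ |G 0| + |G t| :=
    (abs_le_max_abs_abs (hG ⟨le_rfl, ht⟩ ha' ha) (hG ha' ⟨ht, le_rfl⟩ ha'.2)).trans
      (max_le_add_of_nonneg (abs_nonneg _) (abs_nonneg _))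
  refine (_root_.abs_mul_exp_neg_sub_le hγ ha hax (hG ha' hx' hax)).trans ?_
  gcongr
  · exact hG hx' hb' hxb
  · exact mul_nonneg hγ (by linarith)

theorem abs_mul_sum_sub_integral_le {f : ℝ → ℝ} {δ : ℝ} (hδ : 0 ≤ δ) {n : ℕ}
    (hf : IntervalIntegrable f volume 0 (n * δ)) {c : ℕ → ℝ}
    (hc : ∀ k < n, ∀ x ∈ Ioc (k * δ) ((k + 1 : ℕ) * δ), |f x - f (k * δ)| ≤ c k) :
    |δ * ∑ k ∈ Finset.range n, f (k * δ) - ∫ x in 0..n * δ, f x|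
      ≤ δ * ∑ k ∈ Finset.range n, c k := by
  have hgrid : Monotone fun k : ℕ => (k : ℝ) * δ := Nat.mono_cast.mul_const hδ
  have hmem : ∀ j ≤ n, (j : ℝ) * δ ∈ uIcc 0 (n * δ) := fun j hj => by
    rw [Set.uIcc_of_le (by positivity)]
    exact ⟨by positivity, hgrid hj⟩
  have hcell : ∀ k < n, IntervalIntegrable f volume (k * δ) ((k + 1 : ℕ) * δ) := fun k hk =>
    hf.mono_set <| uIcc_subset_uIcc (hmem k hk.le) (hmem (k + 1) hk)
  have hsum := intervalIntegral.sum_integral_adjacent_intervals hcell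
  rw [Nat.cast_zero, zero_mul] at hsum
  rw [← hsum, Finset.mul_sum, ← Finset.sum_sub_distrib, Finset.mul_sum]
  refine (Finset.abs_sum_le_sum_abs _ _).trans (Finset.sum_le_sum fun k hk => ?_)
  have hlen : ((k + 1 : ℕ) : ℝ) * δ - k * δ = δ := by push_cast; ring
  have hconst : δ * f (k * δ) = ∫ _ in (k : ℝ) * δ..((k + 1 : ℕ) : ℝ) * δ, f (k * δ) := by
    rw [intervalIntegral.integral_const, hlen, smul_eq_mul]
  rw [hconst, ← intervalIntegral.integral_sub intervalIntegrable_const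
    (hcell k (Finset.mem_range.1 hk))]
  have hbound := intervalIntegral.norm_integral_le_of_norm_le_const (C := c k)
    (a := k * δ) (b := (k + 1 : ℕ) * δ) (f := fun x => f (k * δ) - f x) fun x hx => by
      rw [uIoc_of_le (hgrid k.le_succ)] at hx
      rw [Real.norm_eq_abs, abs_sub_comm]
      exact hc k (Finset.mem_range.1 hk) x hx
  rw [Real.norm_eq_abs, hlen, abs_of_nonneg hδ] at hbound
  exact hbound.trans_eq (mul_comm _ _)

theorem tendsto_riemannSum_mul_exp_neg {G : ℝ → ℝ} {γ t : ℝ} (hG : MonotoneOn G (Icc 0 t))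
    (hγ : 0 ≤ γ) (ht : 0 ≤ t) :
    Tendsto (fun n : ℕ =>
        t / n * ∑ k ∈ Finset.range n, G (k * (t / n)) * exp (-γ * (k * (t / n)))) atTop
      (𝓝 (∫ x in 0..t, G x * exp (-γ * x))) := by
  set M := |G 0| + |G t|
  have hf : IntervalIntegrable (fun x => G x * exp (-γ * x)) volume 0 t :=
    (hG.mono (by rw [uIcc_of_le ht])).intervalIntegrable.mul_continuousOn (by fun_prop)
  have herr : ∀ n : ℕ, n ≠ 0 →
      |t / n * ∑ k ∈ Finset.range n, G (k * (t / n)) * exp (-γ * (k * (t / n)))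
        - ∫ x in 0..t, G x * exp (-γ * x)| ≤ t / n * (G t - G 0 + γ * t * M) := by
    intro n hn
    set δ := t / n
    have hnδ : (n : ℝ) * δ = t := mul_div_cancel₀ t (Nat.cast_ne_zero.2 hn)
    have hδ : 0 ≤ δ := by positivity
    have hgrid : ∀ j ≤ n, (j : ℝ) * δ ∈ Icc 0 t := fun j hj =>
      ⟨by positivity, hnδ ▸ mul_le_mul_of_nonneg_right (Nat.cast_le.2 hj) hδ⟩
    have hcell := abs_mul_sum_sub_integral_le (f := fun x => G x * exp (-γ * x)) hδ
      (hnδ ▸ hf) (c := fun k => G ((k + 1 : ℕ) * δ) - G (k * δ) + γ * δ * M) fun k hk x hx => by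
        have hlen : ((k + 1 : ℕ) : ℝ) * δ - k * δ = δ := by push_cast; ring
        simpa only [hlen] using hG.abs_mul_exp_neg_sub_le hγ (hgrid k hk.le).1 hx.1.le hx.2
          (hgrid (k + 1) hk).2
    rw [hnδ] at hcell
    refine hcell.trans_eq ?_
    rw [Finset.sum_add_distrib, Finset.sum_range_sub (fun k => G (k * δ)), Finset.sum_const,
      Finset.card_range, nsmul_eq_mul]
    simp only [Nat.cast_zero, zero_mul, hnδ]
    linear_combination δ * γ * M * hnδ
  have hbound : Tendsto (fun n : ℕ => t / n * (G t - G 0 + γ * t * M)) atTop (𝓝 0) := by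
    simpa using (tendsto_const_div_atTop_nhds_zero_nat t).mul_const (G t - G 0 + γ * t * M)
  refine tendsto_iff_norm_sub_tendsto_zero.2 <|
    squeeze_zero' (Eventually.of_forall fun n => norm_nonneg _) ?_ hbound
  filter_upwards [eventually_ne_atTop 0] with n hn using herr n hn

/-- A Riemann–Stieltjes sum for `∫_{(0, nδ]} e^{-γs} dG(s)`, with `e^{-γs}` evaluated at the right
endpoints of the cells `(kδ, (k+1)δ]`. -/
noncomputable def expStieltjesSum (γ : ℝ) (G : ℝ → ℝ) (δ : ℝ) (n : ℕ) : ℝ :=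
  ∑ k ∈ Finset.range n, exp (-γ * ((k + 1 : ℕ) * δ)) * (G ((k + 1 : ℕ) * δ) - G (k * δ))

-- summation by parts against `e^{-γs}`
theorem expStieltjesSum_eq (γ : ℝ) (G : ℝ → ℝ) (δ : ℝ) (n : ℕ) :
    expStieltjesSum γ G δ n = G (n * δ) * exp (-γ * (n * δ)) - G 0
      + (1 - exp (-γ * δ)) * ∑ k ∈ Finset.range n, G (k * δ) * exp (-γ * (k * δ)) := by
  have hterm : ∀ k : ℕ, exp (-γ * ((k + 1 : ℕ) * δ)) * (G ((k + 1 : ℕ) * δ) - G (k * δ))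
      = (G ((k + 1 : ℕ) * δ) * exp (-γ * ((k + 1 : ℕ) * δ)) - G (k * δ) * exp (-γ * (k * δ)))
        + (1 - exp (-γ * δ)) * (G (k * δ) * exp (-γ * (k * δ))) := by
    intro k
    have hexp : exp (-γ * ((k + 1 : ℕ) * δ)) = exp (-γ * (k * δ)) * exp (-γ * δ) := by
      rw [← exp_add]; push_cast; ring_nf
    rw [hexp]; ring
  rw [expStieltjesSum, Finset.sum_congr rfl fun k _ => hterm k, Finset.sum_add_distrib,
    ← Finset.mul_sum,
    Finset.sum_range_sub (fun k => G (k * δ) * exp (-γ * (k * δ)))]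
  simp

theorem tendsto_div_natCast_nhdsGT_zero {t : ℝ} (ht : 0 < t) :
    Tendsto (fun n : ℕ => t / n) atTop (𝓝[>] 0) :=
  tendsto_nhdsWithin_iff.2 ⟨tendsto_const_div_atTop_nhds_zero_nat t,
    (eventually_ne_atTop 0).mono fun _ hn => div_pos ht (Nat.cast_pos.2 (Nat.pos_of_ne_zero hn))⟩

theorem tendsto_expStieltjesSum {G : ℝ → ℝ} {γ t : ℝ} (hG : MonotoneOn G (Icc 0 t))
    (hγ : 0 ≤ γ) (ht : 0 < t) :
    Tendsto (fun n : ℕ => expStieltjesSum γ G (t / n) n) atTop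
      (𝓝 (G t * exp (-γ * t) - G 0 + γ * ∫ x in 0..t, G x * exp (-γ * x))) := by
  -- `(1 - e^{-γδ}) / δ → γ` is the derivative of `e^{-γx}` at `0`
  have hslope : Tendsto (fun δ => (1 - exp (-γ * δ)) / δ) (𝓝[>] 0) (𝓝 γ) := by
    have hlim := ((hasDerivAt_id (0 : ℝ)).const_mul (-γ)).exp.tendsto_slope_zero_right.neg
    rw [show -(exp (-γ * id 0) * (-γ * 1)) = γ by simp] at hlim
    refine hlim.congr fun δ => ?_
    simp only [id, zero_add, mul_zero, exp_zero, smul_eq_mul, div_eq_inv_mul]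
    ring
  have hlim := ((hslope.comp (tendsto_div_natCast_nhdsGT_zero ht)).mul
    (tendsto_riemannSum_mul_exp_neg hG hγ ht.le)).const_add (G t * exp (-γ * t) - G 0)
  refine hlim.congr' ((eventually_ne_atTop 0).mono fun n hn => ?_)
  have hδ0 : t / n ≠ 0 := (div_pos ht (Nat.cast_pos.2 (Nat.pos_of_ne_zero hn))).ne'
  simp only [Function.comp_apply]
  rw [expStieltjesSum_eq, mul_div_cancel₀ t (Nat.cast_ne_zero.2 hn)]
  field_simp

theorem measureReal_Ioc_prod {α β : Type*} [MeasurableSpace α] [MeasurableSpace β]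
    [LinearOrder α] [TopologicalSpace α] [ClosedIicTopology α] [OpensMeasurableSpace α]
    (ρ : Measure (α × β)) [IsFiniteMeasure ρ] {a b : α} (hab : a ≤ b) {s : Set β}
    (hs : MeasurableSet s) :
    ρ.real (Ioc a b ×ˢ s) = ρ.real (Iic b ×ˢ s) - ρ.real (Iic a ×ˢ s) := by
  rw [← measureReal_sdiff (prod_mono (Iic_subset_Iic.2 hab) subset_rfl)
    (measurableSet_Iic.prod hs), prod_sdiff_prod, sdiff_self, prod_empty, empty_union,
    Iic_sdiff_Iic]

theorem measureReal_prod_Ioc {α β : Type*} [MeasurableSpace α] [MeasurableSpace β]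
    [LinearOrder β] [TopologicalSpace β] [ClosedIicTopology β] [OpensMeasurableSpace β]
    (ρ : Measure (α × β)) [IsFiniteMeasure ρ] {s : Set α} (hs : MeasurableSet s) {a b : β}
    (hab : a ≤ b) :
    ρ.real (s ×ˢ Ioc a b) = ρ.real (s ×ˢ Iic b) - ρ.real (s ×ˢ Iic a) := by
  rw [← measureReal_sdiff (prod_mono subset_rfl (Iic_subset_Iic.2 hab))
    (hs.prod measurableSet_Iic), prod_sdiff_prod, sdiff_self, empty_prod, union_empty,
    Iic_sdiff_Iic]

def parallelogram (t u : ℝ) : Set (ℝ × ℝ) :=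
  {p | 0 < p.1 ∧ p.1 ≤ t ∧ p.1 < p.2 ∧ p.2 - p.1 ≤ u}

def diagonalStrip (ε : ℝ) : Set (ℝ × ℝ) := {p | 0 < p.2 - p.1 ∧ p.2 - p.1 < ε}

def gridCell (δ v : ℝ) (k : ℕ) : Set (ℝ × ℝ) :=
  Ioc (k * δ) ((k + 1 : ℕ) * δ) ×ˢ Ioc ((k + 1 : ℕ) * δ) (k * δ + v)

theorem measurableSet_parallelogram (t u : ℝ) : MeasurableSet (parallelogram t u) := by
  unfold parallelogram
  measurability

theorem parallelogram_zero_left (u : ℝ) : parallelogram 0 u = ∅ :=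
  eq_empty_of_forall_notMem fun _ hp => hp.2.1.not_gt hp.1

theorem parallelogram_zero_right (t : ℝ) : parallelogram t 0 = ∅ :=
  eq_empty_of_forall_notMem fun _ hp => hp.2.2.2.not_gt (sub_pos.2 hp.2.2.1)

theorem measurableSet_diagonalStrip (ε : ℝ) : MeasurableSet (diagonalStrip ε) :=
  (measurableSet_lt measurable_const (measurable_snd.sub measurable_fst)).inter
    (measurableSet_lt (measurable_snd.sub measurable_fst) measurable_const)

theorem tendsto_measureReal_diagonalStrip (ρ : Measure (ℝ × ℝ)) [IsFiniteMeasure ρ] :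
    Tendsto (fun ε => ρ.real (diagonalStrip ε)) (𝓝[>] 0) (𝓝 0) := by
  have hlim := tendsto_measure_biInter_gt (μ := ρ) (s := diagonalStrip) (a := 0)
    (fun ε _ => (measurableSet_diagonalStrip ε).nullMeasurableSet)
    (fun _ _ _ hεε' _ hp => ⟨hp.1, hp.2.trans_le hεε'⟩) ⟨1, one_pos, measure_ne_top ρ _⟩
  have hempty : ⋂ ε > (0 : ℝ), diagonalStrip ε = ∅ :=
    eq_empty_of_forall_notMem fun p hp => by
      have hpos := (mem_iInter₂.1 hp 1 one_pos).1
      exact (lt_irrefl _) (mem_iInter₂.1 hp _ hpos).2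
  rw [hempty, measure_empty] at hlim
  exact (ENNReal.tendsto_toReal ENNReal.zero_ne_top).comp hlim

theorem biUnion_gridCell_subset_parallelogram {t u : ℝ} (ht : 0 ≤ t) {n : ℕ} (hn : n ≠ 0) :
    ⋃ k ∈ Finset.range n, gridCell (t / n) u k ⊆ parallelogram t u := by
  intro p hp
  obtain ⟨k, hk, ⟨hs₁, hs₂⟩, hz₁, hz₂⟩ := mem_iUnion₂.1 hp
  have hk1 : ((k + 1 : ℕ) : ℝ) * (t / n) ≤ t := by
    calc ((k + 1 : ℕ) : ℝ) * (t / n) ≤ n * (t / n) := by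
          gcongr; exact_mod_cast Finset.mem_range.1 hk
      _ = t := mul_div_cancel₀ t (Nat.cast_ne_zero.2 hn)
  have hk0 : 0 ≤ (k : ℝ) * (t / n) := by positivity
  exact ⟨by linarith, by linarith, by linarith, by linarith⟩

theorem parallelogram_subset_biUnion_gridCell {t u : ℝ} {n : ℕ} (hn : n ≠ 0) :
    parallelogram t u ⊆
      (⋃ k ∈ Finset.range n, gridCell (t / n) (u + t / n) k) ∪ diagonalStrip (t / n) := by
  rintro p ⟨hs₀, hst, hsz, hzu⟩
  have hcover := Ioc_subset_biUnion_Ioc n (fun k : ℕ => (k : ℝ) * (t / n))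
  simp only [Nat.cast_zero, zero_mul, mul_div_cancel₀ t (Nat.cast_ne_zero.2 hn)] at hcover
  obtain ⟨k, hk, hs₁, hs₂⟩ := mem_iUnion₂.1 (hcover ⟨hs₀, hst⟩)
  have hstep : ((k + 1 : ℕ) : ℝ) * (t / n) = k * (t / n) + t / n := by push_cast; ring
  rcases le_or_gt p.2 ((k + 1 : ℕ) * (t / n)) with hz | hz
  · exact Or.inr ⟨sub_pos.2 hsz, by linarith⟩
  · exact Or.inl (mem_iUnion₂.2 ⟨k, hk, ⟨hs₁, hs₂⟩, hz, by linarith⟩)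

-- Identity (3.2), written for the joint law `ρ` of `(ζ̂, ζ)` on `{V ∈ A}`, with `c = μ A`.
def HasExpTail (ρ : Measure (ℝ × ℝ)) (γ c : ℝ) (σ : ℝ → ℝ) : Prop :=
  ∀ s z, 0 ≤ s → s ≤ z →
    ρ.real (Iic s ×ˢ Iic z) = ρ.real (univ ×ˢ Iic s) + c * σ s * (1 - exp (-γ * (z - s)))

namespace HasExpTail

variable {ρ : Measure (ℝ × ℝ)} [IsFiniteMeasure ρ] {γ c : ℝ} {σ : ℝ → ℝ}

theorem measureReal_Ioc_prod_Ioc (h : HasExpTail ρ γ c σ) {s₁ s₂ a b : ℝ} (h₀ : 0 ≤ s₁)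
    (hs : s₁ ≤ s₂) (ha : s₂ ≤ a) (hab : a ≤ b) :
    ρ.real (Ioc s₁ s₂ ×ˢ Ioc a b)
      = c * (exp (-γ * a) - exp (-γ * b)) * (σ s₂ * exp (γ * s₂) - σ s₁ * exp (γ * s₁)) := by
  have hexp : ∀ z s, exp (-γ * (z - s)) = exp (-γ * z) * exp (γ * s) := fun z s => by
    rw [← exp_add]; ring_nf
  rw [measureReal_Ioc_prod ρ hs measurableSet_Ioc,
    measureReal_prod_Ioc ρ measurableSet_Iic hab, measureReal_prod_Ioc ρ measurableSet_Iic hab,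
    h s₂ b (h₀.trans hs) (ha.trans hab), h s₂ a (h₀.trans hs) ha,
    h s₁ b h₀ ((hs.trans ha).trans hab), h s₁ a h₀ (hs.trans ha), hexp, hexp, hexp, hexp]
  ring

theorem measureReal_biUnion_gridCell (h : HasExpTail ρ γ c σ) {δ v : ℝ} (hδ : 0 ≤ δ)
    (hv : δ ≤ v) (n : ℕ) :
    ρ.real (⋃ k ∈ Finset.range n, gridCell δ v k)
      = c * (1 - exp (-γ * (v - δ))) * expStieltjesSum γ (fun s => σ s * exp (γ * s)) δ n := by
  have hgrid : Monotone fun k : ℕ => (k : ℝ) * δ := Nat.mono_cast.mul_const hδ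
  have hdisj : (↑(Finset.range n) : Set ℕ).PairwiseDisjoint (gridCell δ v) :=
    fun i _ j _ hij => ((hgrid.pairwise_disjoint_on_Ioc_succ hij).set_prod_left _ _ :)
  rw [measureReal_biUnion_finset hdisj fun k _ => measurableSet_Ioc.prod measurableSet_Ioc,
    expStieltjesSum, Finset.mul_sum]
  refine Finset.sum_congr rfl fun k _ => ?_
  have hstep : ((k + 1 : ℕ) : ℝ) * δ = k * δ + δ := by push_cast; ring
  rw [gridCell, h.measureReal_Ioc_prod_Ioc (by positivity) (hgrid k.le_succ) le_rfl
    (by linarith), show k * δ + v = (k + 1 : ℕ) * δ + (v - δ) by rw [hstep]; ring,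
    mul_add, neg_mul, exp_add]
  ring

theorem measureReal_parallelogram (h : HasExpTail ρ γ c σ) (hγ : 0 ≤ γ)
    (hG : MonotoneOn (fun s => σ s * exp (γ * s)) (Ici 0)) {t u : ℝ} (ht : 0 ≤ t) (hu : 0 ≤ u) :
    ρ.real (parallelogram t u) = c * (1 - exp (-γ * u)) * (σ t - σ 0 + γ * ∫ x in 0..t, σ x) := by
  rcases ht.eq_or_lt with rfl | ht
  · simp [parallelogram_zero_left]
  rcases hu.eq_or_lt with rfl | hu
  · simp [parallelogram_zero_right]
  set S := fun n : ℕ => expStieltjesSum γ (fun s => σ s * exp (γ * s)) (t / n) n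
  set K := σ t - σ 0 + γ * ∫ x in 0..t, σ x
  have hσ : ∀ x, σ x * exp (γ * x) * exp (-γ * x) = σ x := fun x => by
    rw [mul_assoc, ← exp_add, neg_mul, add_neg_cancel, exp_zero, mul_one]
  have hS : Tendsto S atTop (𝓝 K) := by
    simpa only [hσ, mul_zero, exp_zero, mul_one] using
      tendsto_expStieltjesSum (hG.mono Icc_subset_Ici_self) hγ ht
  have hδ := tendsto_div_natCast_nhdsGT_zero ht
  have hlower : ∀ᶠ n : ℕ in atTop,
      c * (1 - exp (-γ * (u - t / n))) * S n ≤ ρ.real (parallelogram t u) := by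
    filter_upwards [eventually_ne_atTop 0,
      (tendsto_nhdsWithin_iff.1 hδ).1.eventually (Iic_mem_nhds hu)] with n hn hδu
    rw [← h.measureReal_biUnion_gridCell (by positivity) hδu]
    exact measureReal_mono (biUnion_gridCell_subset_parallelogram ht.le hn)
  have hupper : ∀ᶠ n : ℕ in atTop, ρ.real (parallelogram t u)
      ≤ c * (1 - exp (-γ * u)) * S n + ρ.real (diagonalStrip (t / n)) := by
    filter_upwards [eventually_ne_atTop 0] with n hn
    calc ρ.real (parallelogram t u)
        ≤ ρ.real ((⋃ k ∈ Finset.range n, gridCell (t / n) (u + t / n) k)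
            ∪ diagonalStrip (t / n)) :=
          measureReal_mono (parallelogram_subset_biUnion_gridCell hn)
      _ ≤ ρ.real (⋃ k ∈ Finset.range n, gridCell (t / n) (u + t / n) k)
          + ρ.real (diagonalStrip (t / n)) := measureReal_union_le _ _
      _ = _ := by
          rw [h.measureReal_biUnion_gridCell (by positivity) (by linarith), add_sub_cancel_right]
  have hlowlim : Tendsto (fun n : ℕ => c * (1 - exp (-γ * (u - t / n))) * S n) atTop
      (𝓝 (c * (1 - exp (-γ * u)) * K)) := by
    have hu' : Tendsto (fun n : ℕ => u - t / n) atTop (𝓝 u) := by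
      simpa using tendsto_const_nhds.sub (tendsto_nhdsWithin_iff.1 hδ).1
    have hcont : Continuous fun x => c * (1 - exp (-γ * x)) := by fun_prop
    exact ((hcont.tendsto u).comp hu').mul hS
  have huplim : Tendsto
      (fun n : ℕ => c * (1 - exp (-γ * u)) * S n + ρ.real (diagonalStrip (t / n))) atTop
      (𝓝 (c * (1 - exp (-γ * u)) * K)) := by
    simpa using (hS.const_mul _).add ((tendsto_measureReal_diagonalStrip ρ).comp hδ)
  exact le_antisymm (le_of_tendsto_of_tendsto tendsto_const_nhds huplim hupper)
    (le_of_tendsto_of_tendsto hlowlim tendsto_const_nhds hlower)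

end HasExpTail

theorem stmt_7_general {Ω : Type*} [MeasurableSpace Ω] (P : Measure Ω) [IsProbabilityMeasure P]
    {S : Type*} [MeasurableSpace S] (μ : Measure S) [IsProbabilityMeasure μ]
    (γ : ℝ) (hγ : 0 < γ)
    (ζ : Ω → ℝ) (V : Ω → S) (hζm : Measurable ζ)
    (ζhat : Ω → ℝ) (hζhatm : Measurable ζhat)
    (σ : ℝ → ℝ) (hσ01 : ∀ t, 0 ≤ t → σ t ∈ Set.Icc (0 : ℝ) 1)
    (h32 : ∀ t u, 0 ≤ t → 0 ≤ u → ∀ A : Set S, MeasurableSet A →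
      P {ω | ζhat ω ≤ t ∧ ζ ω ≤ u ∧ V ω ∈ A} =
        P {ω | ζ ω ≤ min t u ∧ V ω ∈ A} +
          ENNReal.ofReal (σ t * (1 - Real.exp (-γ * max (u - t) 0))) * μ A)
    (hmono : ∀ s t, 0 ≤ s → s ≤ t → σ s * Real.exp (γ * s) ≤ σ t * Real.exp (γ * t)) :
    ∀ t u : ℝ, 0 ≤ t → 0 ≤ u → ∀ A : Set S, MeasurableSet A →
      P {ω | 0 < ζhat ω ∧ ζhat ω ≤ t ∧ ζhat ω < ζ ω ∧ ζ ω - ζhat ω ≤ u ∧ V ω ∈ A} =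
        μ A * ENNReal.ofReal
          ((1 - Real.exp (-γ * u)) * (σ t - σ 0 + γ * ∫ x in (0 : ℝ)..t, σ x)) := by
  intro t u ht hu A hA
  set ρ := (P.restrict (V ⁻¹' A)).map fun ω => (ζhat ω, ζ ω)
  have hρ : ∀ B, MeasurableSet B → ρ B = P {ω | (ζhat ω, ζ ω) ∈ B ∧ V ω ∈ A} := fun B hB => by
    rw [Measure.map_apply (hζhatm.prodMk hζm) hB, Measure.restrict_apply (hζhatm.prodMk hζm hB)]
    rfl
  have htail : HasExpTail ρ γ (μ.real A) σ := fun s z hs hsz => by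
    have h := h32 s z hs (hs.trans hsz) A hA
    rw [min_eq_left hsz, max_eq_left (sub_nonneg.2 hsz)] at h
    have hnonneg : 0 ≤ σ s * (1 - exp (-γ * (z - s))) :=
      mul_nonneg (hσ01 s hs).1 (sub_nonneg.2 (exp_le_one_iff.2 (by nlinarith)))
    simp only [measureReal_def, hρ _ (measurableSet_Iic.prod measurableSet_Iic),
      hρ _ (MeasurableSet.univ.prod measurableSet_Iic), mem_prod, mem_Iic, mem_univ, true_and,
      and_assoc]
    rw [h, ENNReal.toReal_add (by finiteness) (by finiteness), ENNReal.toReal_mul,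
      ENNReal.toReal_ofReal hnonneg]
    ring
  have hG : MonotoneOn (fun s => σ s * exp (γ * s)) (Ici 0) := fun s hs _ _ hss' =>
    hmono _ _ hs hss'
  have key := htail.measureReal_parallelogram hγ.le hG ht hu
  rw [measureReal_def, hρ _ (measurableSet_parallelogram t u)] at key
  simp only [parallelogram, mem_ofPred_eq, and_assoc] at key
  rw [← ofReal_measureReal, measureReal_def, key, mul_assoc,
    ENNReal.ofReal_mul measureReal_nonneg, ofReal_measureReal]

/-- If `ζ̂` and `σ : ℝ₊ → [0,1]` satisfy identity (3.2) and `G(t) = σ(t)e^{γt}` is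
nondecreasing, then `ℙ(ζ̂ ∈ (0,t], 0 < ζ − ζ̂ ≤ u, V ∈ A) =
μ(A)(1 − e^{−γu})(σ(t) − σ(0) + γ∫₀ᵗ σ(x)dx)`. -/
theorem stmt_7 {Ω : Type*} [MeasurableSpace Ω] (P : Measure Ω) [IsProbabilityMeasure P]
    {S : Type*} [MeasurableSpace S] (μ : Measure S) [IsProbabilityMeasure μ]
    (γ : ℝ) (hγ : 0 < γ)
    (ζ : Ω → ℝ) (V : Ω → S) (hζm : Measurable ζ) (hVm : Measurable V)
    (hζ0 : ∀ ω, 0 ≤ ζ ω)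
    (ζhat : Ω → ℝ) (hζhatm : Measurable ζhat) (hζhat0 : ∀ ω, 0 ≤ ζhat ω)
    (σ : ℝ → ℝ) (hσ01 : ∀ t, 0 ≤ t → σ t ∈ Set.Icc (0 : ℝ) 1)
    (h32 : ∀ t u, 0 ≤ t → 0 ≤ u → ∀ A : Set S, MeasurableSet A →
      P {ω | ζhat ω ≤ t ∧ ζ ω ≤ u ∧ V ω ∈ A} =
        P {ω | ζ ω ≤ min t u ∧ V ω ∈ A} +
          ENNReal.ofReal (σ t * (1 - Real.exp (-γ * max (u - t) 0))) * μ A)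
    (hmono : ∀ s t, 0 ≤ s → s ≤ t → σ s * Real.exp (γ * s) ≤ σ t * Real.exp (γ * t)) :
    ∀ t u : ℝ, 0 ≤ t → 0 ≤ u → ∀ A : Set S, MeasurableSet A →
      P {ω | 0 < ζhat ω ∧ ζhat ω ≤ t ∧ ζhat ω < ζ ω ∧ ζ ω - ζhat ω ≤ u ∧ V ω ∈ A} =
        μ A * ENNReal.ofReal
          ((1 - Real.exp (-γ * u)) * (σ t - σ 0 + γ * ∫ x in (0 : ℝ)..t, σ x)) :=
  stmt_7_general P μ γ hγ ζ V hζm ζhat hζhatm σ hσ01 h32 hmono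
end

section
/- If ζ̂ is a nonnegative integer-valued random variable defined on the same probability space as (ζ,V) such that ℙ(ζ̂ ≤ ζ) = 1 and, for every t ∈ ℤ₊ with ℙ(ζ̂ ≤ t, ζ > t) > 0, the conditional distribution of (ζ − t, V) given {ζ̂ ≤ t, ζ > t} equals ν_γ × μ, then σ(t) := ℙ(ζ̂ ≤ t, ζ > t) satisfies condition (3.1)′ and G(t) = σ(t)(1−γ)^{−t} is nondecreasing on ℤ₊. -/
/-!
Write `A t = {ζ̂ ≤ t < ζ}`. Since the conditional law of `(ζ - t, V)` on `A t` is `ν_γ × μ`,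
`ℙ(A t ∩ {(ζ - t, V) ∈ C}) = σ(t) (ν_γ × μ)(C)`, which gives (3.1)′. For `s ≤ t`, taking
`C = {k > t - s} × S`, of mass `(1 - γ)^(t - s)`, turns this into
`σ(s) (1 - γ)^(t - s) = ℙ(A s ∩ {ζ > t}) ≤ σ(t)`, because `A s ∩ {ζ > t} ⊆ A t`.
-/

open MeasureTheory ProbabilityTheory Real Set

/-- The geometric distribution on `{1, 2, …}` with `ν_γ({k}) = γ(1−γ)^{k−1}`
(mean `γ⁻¹`), as a measure on `ℕ`. -/
noncomputable def geomν (γ : ℝ) : Measure ℕ :=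
  MeasureTheory.Measure.count.withDensity
    (fun k => if k = 0 then 0 else ENNReal.ofReal (γ * (1 - γ) ^ (k - 1)))

lemma hasSum_geom_tail {γ : ℝ} (hγ : 0 < γ) (hγ1 : γ ≤ 1) (m : ℕ) :
    HasSum (fun k : ℕ => if m < k then γ * (1 - γ) ^ (k - 1) else 0) ((1 - γ) ^ m) := by
  rw [← hasSum_nat_add_iff' (m + 1)]
  have hhead : ∑ k ∈ Finset.range (m + 1), (if m < k then γ * (1 - γ) ^ (k - 1) else 0) = 0 :=
    Finset.sum_eq_zero fun k hk => if_neg (by simp at hk; omega)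
  have hshift : ∀ n : ℕ, (if m < n + (m + 1) then γ * (1 - γ) ^ (n + (m + 1) - 1) else 0) =
      γ * (1 - γ) ^ m * (1 - γ) ^ n := fun n => by
    rw [if_pos (by omega), show n + (m + 1) - 1 = m + n by omega, pow_add, mul_assoc]
  simp only [hhead, sub_zero, hshift]
  have hgeom := (hasSum_geometric_of_lt_one (r := 1 - γ) (by linarith) (by linarith)).mul_left
    (γ * (1 - γ) ^ m)
  rwa [sub_sub_cancel, mul_right_comm, mul_inv_cancel₀ hγ.ne', one_mul] at hgeom

lemma geomν_Ioi {γ : ℝ} (hγ : 0 < γ) (hγ1 : γ ≤ 1) (m : ℕ) :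
    geomν γ (Ioi m) = ENNReal.ofReal ((1 - γ) ^ m) := by
  have htail := hasSum_geom_tail hγ hγ1 m
  rw [geomν, withDensity_apply _ .of_discrete, ← lintegral_indicator .of_discrete,
    lintegral_count, ← htail.tsum_eq,
    ENNReal.ofReal_tsum_of_nonneg (fun k => by split_ifs <;> positivity) htail.summable]
  congr 1
  funext k
  by_cases hk : m < k
  · simp [hk, Nat.ne_zero_of_lt hk]
  · simp [hk]

lemma measure_mul_le_measure_inter_preimage {Ω α : Type*} [MeasurableSpace Ω] [MeasurableSpace α]
    {P : Measure Ω} [IsFiniteMeasure P] {ν : Measure α} {A : Set Ω} {f : Ω → α}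
    (hf : Measurable f) (hcond : 0 < P A → (P[|A]).map f = ν) {C : Set α}
    (hC : MeasurableSet C) : P A * ν C ≤ P (A ∩ f ⁻¹' C) := by
  rcases eq_zero_or_pos (P A) with h0 | hpos
  · simp [h0]
  rw [← hcond hpos, Measure.map_apply hf hC, cond_apply' (hf hC), ← mul_assoc,
    ENNReal.mul_inv_cancel hpos.ne' (measure_ne_top _ _), one_mul]

lemma measure_le_lt_mul_pow_le {Ω : Type*} [MeasurableSpace Ω] {P : Measure Ω}
    [IsFiniteMeasure P] {S : Type*} [MeasurableSpace S] {μ : Measure S} [IsProbabilityMeasure μ]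
    {γ : ℝ} (hγ : 0 < γ) (hγ1 : γ ≤ 1) {ζ ζhat : Ω → ℕ} {V : Ω → S}
    (hζm : Measurable ζ) (hVm : Measurable V)
    (hcond : ∀ t : ℕ, 0 < P {ω | ζhat ω ≤ t ∧ t < ζ ω} →
      Measure.map (fun ω => (ζ ω - t, V ω)) (P[|{ω | ζhat ω ≤ t ∧ t < ζ ω}]) =
        (geomν γ).prod μ)
    {s t : ℕ} (hst : s ≤ t) :
    P {ω | ζhat ω ≤ s ∧ s < ζ ω} * ENNReal.ofReal ((1 - γ) ^ (t - s)) ≤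
      P {ω | ζhat ω ≤ t ∧ t < ζ ω} :=
  calc P {ω | ζhat ω ≤ s ∧ s < ζ ω} * ENNReal.ofReal ((1 - γ) ^ (t - s))
      = P {ω | ζhat ω ≤ s ∧ s < ζ ω} * (geomν γ).prod μ (Ioi (t - s) ×ˢ univ) := by
        rw [Measure.prod_prod, geomν_Ioi hγ hγ1, measure_univ, mul_one]
    _ ≤ P ({ω | ζhat ω ≤ s ∧ s < ζ ω} ∩ (fun ω => (ζ ω - s, V ω)) ⁻¹' (Ioi (t - s) ×ˢ univ)) :=
        measure_mul_le_measure_inter_preimage (by fun_prop) (hcond s)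
          (measurableSet_Ioi.prod .univ)
    _ ≤ P {ω | ζhat ω ≤ t ∧ t < ζ ω} := measure_mono fun ω ⟨⟨hs, _⟩, hts, _⟩ =>
        ⟨hs.trans hst, by simp only [mem_Ioi] at hts; omega⟩

theorem stmt_11_general {Ω : Type*} [MeasurableSpace Ω] (P : Measure Ω) [IsProbabilityMeasure P]
    {S : Type*} [MeasurableSpace S] (μ : Measure S) [IsProbabilityMeasure μ]
    (γ : ℝ) (hγ : 0 < γ) (hγ1 : γ ≤ 1)
    (ζ : Ω → ℕ) (V : Ω → S) (hζm : Measurable ζ) (hVm : Measurable V)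
    (ζhat : Ω → ℕ)
    (hcond : ∀ t : ℕ, 0 < P {ω | ζhat ω ≤ t ∧ t < ζ ω} →
      Measure.map (fun ω => (ζ ω - t, V ω)) (P[|{ω | ζhat ω ≤ t ∧ t < ζ ω}]) =
        (geomν γ).prod μ) :
    (∀ t : ℕ, ∀ C : Set (ℕ × S), MeasurableSet C →
      0 < ((geomν γ).prod μ) C →
      ENNReal.ofReal ((P {ω | ζhat ω ≤ t ∧ t < ζ ω}).toReal) ≤
        P ((fun ω => (ζ ω - t, V ω)) ⁻¹' C) / ((geomν γ).prod μ) C) ∧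
    (∀ s t : ℕ, s ≤ t →
      (P {ω | ζhat ω ≤ s ∧ s < ζ ω}).toReal * (1 - γ) ^ t ≤
        (P {ω | ζhat ω ≤ t ∧ t < ζ ω}).toReal * (1 - γ) ^ s) := by
  refine ⟨fun t C hC hCpos => ?_, fun s t hst => ?_⟩
  · rw [ENNReal.ofReal_toReal (measure_ne_top _ _),
      ENNReal.le_div_iff_mul_le (.inl hCpos.ne') (.inr (measure_ne_top _ _))]
    exact (measure_mul_le_measure_inter_preimage (by fun_prop) (hcond t) hC).trans
      (measure_mono inter_subset_right)
  · have hγ0 : 0 ≤ 1 - γ := by linarith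
    have hwindow := ENNReal.toReal_mono (measure_ne_top _ _)
      (measure_le_lt_mul_pow_le hγ hγ1 hζm hVm hcond hst)
    rw [ENNReal.toReal_mul, ENNReal.toReal_ofReal (pow_nonneg hγ0 _)] at hwindow
    calc (P {ω | ζhat ω ≤ s ∧ s < ζ ω}).toReal * (1 - γ) ^ t
        = (P {ω | ζhat ω ≤ s ∧ s < ζ ω}).toReal * (1 - γ) ^ (t - s) * (1 - γ) ^ s := by
          rw [mul_assoc, ← pow_add, Nat.sub_add_cancel hst]
      _ ≤ (P {ω | ζhat ω ≤ t ∧ t < ζ ω}).toReal * (1 - γ) ^ s := by gcongr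

/-- Theorem 3.4 (lattice converse part): if `ζ̂` is a strong memoryless time for `(ζ, V)`
with parameters `(γ, μ)`, then `σ(t) := ℙ(ζ̂ ≤ t, ζ > t)` satisfies condition (3.1)′,
and `G(t) = σ(t)(1−γ)^{−t}` is nondecreasing on `ℤ₊` (stated in the equivalent
cross-multiplied form). -/
theorem stmt_11 {Ω : Type*} [MeasurableSpace Ω] (P : Measure Ω) [IsProbabilityMeasure P]
    {S : Type*} [MeasurableSpace S] (μ : Measure S) [IsProbabilityMeasure μ]
    (γ : ℝ) (hγ : 0 < γ) (hγ1 : γ ≤ 1)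
    (ζ : Ω → ℕ) (V : Ω → S) (hζm : Measurable ζ) (hVm : Measurable V)
    (ζhat : Ω → ℕ) (hζhatm : Measurable ζhat)
    (hle : P {ω | ζhat ω ≤ ζ ω} = 1)
    (hcond : ∀ t : ℕ, 0 < P {ω | ζhat ω ≤ t ∧ t < ζ ω} →
      Measure.map (fun ω => (ζ ω - t, V ω)) (P[|{ω | ζhat ω ≤ t ∧ t < ζ ω}]) =
        (geomν γ).prod μ) :
    (∀ t : ℕ, ∀ C : Set (ℕ × S), MeasurableSet C →
      0 < ((geomν γ).prod μ) C →
      ENNReal.ofReal ((P {ω | ζhat ω ≤ t ∧ t < ζ ω}).toReal) ≤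
        P ((fun ω => (ζ ω - t, V ω)) ⁻¹' C) / ((geomν γ).prod μ) C) ∧
    (∀ s t : ℕ, s ≤ t →
      (P {ω | ζhat ω ≤ s ∧ s < ζ ω}).toReal * (1 - γ) ^ t ≤
        (P {ω | ζhat ω ≤ t ∧ t < ζ ω}).toReal * (1 - γ) ^ s) :=
  stmt_11_general P μ γ hγ hγ1 ζ V hζm hVm ζhat hcond
end

section
/- Let ζ̂ be a nonnegative integer-valued random variable defined on the same probability space as (ζ,V) such that ℙ(ζ̂ ≤ ζ) = 1 and, for every t ∈ ℤ₊ with ℙ(ζ̂ ≤ t, ζ > t) > 0, the conditional distribution of (ζ − t, V) given {ζ̂ ≤ t, ζ > t} equals ν_γ × μ; set σ(t) = ℙ(ζ̂ ≤ t, ζ > t). Then for all s, t, u ∈ ℤ₊ and A ∈ 𝒮: (i) ℙ(ζ̂ ≤ s, 0 < ζ − ζ̂ ≤ u, V ∈ A) = ℙ(ζ̂ ≤ s, ζ̂ < ζ)·(1 − (1−γ)^u)·μ(A); (ii) ℙ(ζ̂ ≤ t, ζ̂ < ζ) = σ(t) + γ∑_{i=0}^{t−1} σ(i); (iii) ℙ(ζ̂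 = ζ ≤ t, V ∈ A) = ℙ(ζ ≤ t, V ∈ A) − μ(A)·γ∑_{i=0}^{t−1} σ(i). -/
open MeasureTheory ProbabilityTheory Real Set

lemma geomν_singleton_succ (γ : ℝ) (k : ℕ) :
    geomν γ {k + 1} = ENNReal.ofReal (γ * (1 - γ) ^ k) := by
  simp [geomν, withDensity_apply _ (measurableSet_singleton _)]

lemma geomν_Ioc {γ : ℝ} (hγ : 0 ≤ γ) (hγ1 : γ ≤ 1) {a b : ℕ} (hab : a ≤ b) :
    geomν γ (Ioc a b) = ENNReal.ofReal ((1 - γ) ^ a - (1 - γ) ^ b) := by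
  induction b, hab using Nat.le_induction with
  | base => simp
  | succ b hab ih =>
    have hpow : (1 - γ) ^ b ≤ (1 - γ) ^ a :=
      pow_le_pow_of_le_one (by linarith) (by linarith) hab
    have hsplit : Ioc a (b + 1) = Ioc a b ∪ {b + 1} := by ext; simp; omega
    rw [hsplit, measure_union (by simp) (measurableSet_singleton _), ih,
      geomν_singleton_succ, ← ENNReal.ofReal_add (by linarith) (by positivity)]
    ring_nf

lemma measure_inter_preimage_of_map_cond {Ω β : Type*} [MeasurableSpace Ω] [MeasurableSpace β]
    {P : Measure Ω} [IsFiniteMeasure P] {E : Set Ω} (hE : MeasurableSet E) {f : Ω → β}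
    (hf : Measurable f) {ρ : Measure β} (h : 0 < P E → (P[|E]).map f = ρ) {C : Set β}
    (hC : MeasurableSet C) : P (E ∩ f ⁻¹' C) = P E * ρ C := by
  rcases eq_zero_or_pos (P E) with hE0 | hEpos
  · rw [hE0, zero_mul]
    exact measure_mono_null inter_subset_left hE0
  · rw [← cond_mul_eq_inter hE, ← Measure.map_apply hf hC, h hEpos, mul_comm]

lemma measureReal_prod_eq_add {α β : Type*} [MeasurableSpace α] [DiscreteMeasurableSpace α]
    [MeasurableSpace β] {Q : Measure (α × β)} [IsFiniteMeasure Q] {T T₁ T₂ : Set α}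
    (hT : ∀ p, p ∈ T ↔ p ∈ T₁ ∨ p ∈ T₂) (hd : ∀ p ∈ T₁, p ∉ T₂) {A : Set β}
    (hA : MeasurableSet A) :
    Q.real (T ×ˢ A) = Q.real (T₁ ×ˢ A) + Q.real (T₂ ×ˢ A) := by
  rw [show T = T₁ ∪ T₂ from Set.ext hT, union_prod]
  exact measureReal_union ((disjoint_left.2 hd).set_prod_left A A)
    (MeasurableSet.of_discrete.prod hA)

section StrongMemorylessLaw

variable {S : Type*} [MeasurableSpace S]

/-- `Q` stands for the law of `((ζ̂, ζ), V)`: given `ζ̂ ≤ t < ζ`, the pair `(ζ - t, V)` has law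
`ν ⊗ μ`, stated on rectangles with the conditioning multiplied out. -/
def IsStrongMemorylessLaw (Q : Measure ((ℕ × ℕ) × S)) (ν : Measure ℕ) (μ : Measure S) : Prop :=
  ∀ (t : ℕ) (B : Set ℕ) (A : Set S), MeasurableSet A →
    Q ({p | p.1 ≤ t ∧ t < p.2 ∧ p.2 - t ∈ B} ×ˢ A) =
      Q ({p | p.1 ≤ t ∧ t < p.2} ×ˢ univ) * (ν B * μ A)

/-- The paper's `σ(t) = ℙ(ζ̂ ≤ t < ζ)`. -/
noncomputable def straddleMass (Q : Measure ((ℕ × ℕ) × S)) (t : ℕ) : ℝ :=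
  Q.real ({p | p.1 ≤ t ∧ t < p.2} ×ˢ univ)

lemma isStrongMemorylessLaw_map {Ω : Type*} [MeasurableSpace Ω] {P : Measure Ω}
    [IsFiniteMeasure P] {ζhat ζ : Ω → ℕ} {V : Ω → S} (hζhat : Measurable ζhat)
    (hζ : Measurable ζ) (hV : Measurable V) {ν : Measure ℕ} {μ : Measure S} [SFinite μ]
    (hcond : ∀ t : ℕ, 0 < P {ω | ζhat ω ≤ t ∧ t < ζ ω} →
      (P[|{ω | ζhat ω ≤ t ∧ t < ζ ω}]).map (fun ω => (ζ ω - t, V ω)) = ν.prod μ) :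
    IsStrongMemorylessLaw (P.map fun ω => ((ζhat ω, ζ ω), V ω)) ν μ := by
  intro t B A hA
  have hX : Measurable fun ω => ((ζhat ω, ζ ω), V ω) := (hζhat.prodMk hζ).prodMk hV
  have hE : MeasurableSet {ω | ζhat ω ≤ t ∧ t < ζ ω} :=
    hζhat.prodMk hζ (MeasurableSet.of_discrete (s := {p : ℕ × ℕ | p.1 ≤ t ∧ t < p.2}))
  have key := measure_inter_preimage_of_map_cond hE ((hζ.sub_const t).prodMk hV) (hcond t)
    (C := B ×ˢ A) (MeasurableSet.of_discrete.prod hA)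
  rw [Measure.prod_prod] at key
  rw [Measure.map_apply hX (MeasurableSet.of_discrete.prod hA),
    Measure.map_apply hX (MeasurableSet.of_discrete.prod .univ)]
  convert key using 2
  · ext ω
    simp only [mem_preimage, mem_prod, mem_ofPred_eq, mem_inter_iff]
    tauto
  · congr 1
    ext ω
    simp

namespace IsStrongMemorylessLaw

variable {Q : Measure ((ℕ × ℕ) × S)} {μ : Measure S} {γ : ℝ}

lemma measureReal_le_lt_le (hQ : IsStrongMemorylessLaw Q (geomν γ) μ) (hγ : 0 ≤ γ)
    (hγ1 : γ ≤ 1) {t m n : ℕ} (htm : t ≤ m) (hmn : m ≤ n) {A : Set S} (hA : MeasurableSet A) :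
    Q.real ({p | p.1 ≤ t ∧ m < p.2 ∧ p.2 ≤ n} ×ˢ A) =
      straddleMass Q t * ((1 - γ) ^ (m - t) - (1 - γ) ^ (n - t)) * μ.real A := by
  have hset : {p : ℕ × ℕ | p.1 ≤ t ∧ m < p.2 ∧ p.2 ≤ n} =
      {p | p.1 ≤ t ∧ t < p.2 ∧ p.2 - t ∈ Ioc (m - t) (n - t)} := by
    ext; simp; omega
  have hpow : (1 - γ) ^ (n - t) ≤ (1 - γ) ^ (m - t) :=
    pow_le_pow_of_le_one (by linarith) (by linarith) (by omega)
  rw [hset, measureReal_def, hQ t _ A hA, geomν_Ioc hγ hγ1 (by omega), ENNReal.toReal_mul,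
    ENNReal.toReal_mul, ENNReal.toReal_ofReal (by linarith), ← mul_assoc, straddleMass,
    measureReal_def, measureReal_def]

lemma measureReal_lt_le [IsFiniteMeasure Q] (hQ : IsStrongMemorylessLaw Q (geomν γ) μ)
    (hγ : 0 ≤ γ) (hγ1 : γ ≤ 1) (t : ℕ) {A : Set S} (hA : MeasurableSet A) :
    Q.real ({p | p.1 < p.2 ∧ p.2 ≤ t} ×ˢ A) =
      γ * (∑ i ∈ Finset.range t, straddleMass Q i) * μ.real A := by
  induction t with
  | zero =>
    rw [show {p : ℕ × ℕ | p.1 < p.2 ∧ p.2 ≤ 0} = ∅ by ext; simp; omega]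
    simp
  | succ t ih =>
    rw [measureReal_prod_eq_add (T₁ := {p | p.1 < p.2 ∧ p.2 ≤ t})
      (T₂ := {p | p.1 ≤ t ∧ t < p.2 ∧ p.2 ≤ t + 1}) (fun p => by simp; omega)
      (fun p h₁ h₂ => by simp at h₁ h₂; omega) hA,
      ih, hQ.measureReal_le_lt_le hγ hγ1 le_rfl (by omega) hA, Finset.sum_range_succ, tsub_self,
      add_tsub_cancel_left]
    ring

lemma measureReal_le_lt [IsFiniteMeasure Q] [IsProbabilityMeasure μ]
    (hQ : IsStrongMemorylessLaw Q (geomν γ) μ) (hγ : 0 ≤ γ) (hγ1 : γ ≤ 1) (t : ℕ) :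
    Q.real ({p | p.1 ≤ t ∧ p.1 < p.2} ×ˢ univ) =
      straddleMass Q t + γ * ∑ i ∈ Finset.range t, straddleMass Q i := by
  rw [measureReal_prod_eq_add (T₁ := {p | p.1 ≤ t ∧ t < p.2}) (T₂ := {p | p.1 < p.2 ∧ p.2 ≤ t})
    (fun p => by simp; omega) (fun p h₁ h₂ => by simp at h₁ h₂; omega) MeasurableSet.univ,
    hQ.measureReal_lt_le hγ hγ1 t MeasurableSet.univ, probReal_univ, mul_one, straddleMass]

lemma measureReal_le_lt_sub_le [IsFiniteMeasure Q] [IsProbabilityMeasure μ]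
    (hQ : IsStrongMemorylessLaw Q (geomν γ) μ) (hγ : 0 ≤ γ) (hγ1 : γ ≤ 1) (s u : ℕ)
    {A : Set S} (hA : MeasurableSet A) :
    Q.real ({p | p.1 ≤ s ∧ p.1 < p.2 ∧ p.2 - p.1 ≤ u} ×ˢ A) =
      Q.real ({p | p.1 ≤ s ∧ p.1 < p.2} ×ˢ univ) * (1 - (1 - γ) ^ u) * μ.real A := by
  rw [hQ.measureReal_le_lt hγ hγ1]
  induction s with
  | zero =>
    rw [show {p : ℕ × ℕ | p.1 ≤ 0 ∧ p.1 < p.2 ∧ p.2 - p.1 ≤ u} =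
        {p | p.1 ≤ 0 ∧ 0 < p.2 ∧ p.2 ≤ u} by ext; simp; omega,
      hQ.measureReal_le_lt_le hγ hγ1 le_rfl u.zero_le hA]
    simp
  | succ s ih =>
    have hnew := measureReal_prod_eq_add (Q := Q)
      (T := {p | p.1 ≤ s + 1 ∧ s + 1 < p.2 ∧ p.2 ≤ s + 1 + u})
      (T₁ := {p | p.1 ≤ s ∧ s + 1 < p.2 ∧ p.2 ≤ s + 1 + u})
      (T₂ := {p | p.1 = s + 1 ∧ s + 1 < p.2 ∧ p.2 ≤ s + 1 + u})
      (fun p => by simp; omega) (fun p h₁ h₂ => by simp at h₁ h₂; omega) hA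
    rw [hQ.measureReal_le_lt_le hγ hγ1 le_rfl (by omega) hA,
      hQ.measureReal_le_lt_le hγ hγ1 (by omega) (by omega) hA, tsub_self,
      add_tsub_cancel_left, add_tsub_cancel_left, show s + 1 + u - s = u + 1 by omega] at hnew
    rw [measureReal_prod_eq_add (T₁ := {p | p.1 ≤ s ∧ p.1 < p.2 ∧ p.2 - p.1 ≤ u})
      (T₂ := {p | p.1 = s + 1 ∧ s + 1 < p.2 ∧ p.2 ≤ s + 1 + u})
      (fun p => by simp; omega) (fun p h₁ h₂ => by simp at h₁ h₂; omega) hA,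
      ih, Finset.sum_range_succ]
    linear_combination -hnew

lemma measureReal_le_eq_add [IsFiniteMeasure Q] (hQ : IsStrongMemorylessLaw Q (geomν γ) μ)
    (hγ : 0 ≤ γ) (hγ1 : γ ≤ 1) (hle : ∀ᵐ x ∂Q, x.1.1 ≤ x.1.2) (t : ℕ) {A : Set S}
    (hA : MeasurableSet A) :
    Q.real ({p | p.2 ≤ t} ×ˢ A) =
      Q.real ({p | p.1 = p.2 ∧ p.2 ≤ t} ×ˢ A) +
        γ * (∑ i ∈ Finset.range t, straddleMass Q i) * μ.real A := by
  have hae : ({p | p.2 ≤ t} ×ˢ A : Set ((ℕ × ℕ) × S)) =ᵐ[Q]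
      {p | p.1 ≤ p.2 ∧ p.2 ≤ t} ×ˢ A := by
    refine Filter.eventuallyEq_set.2 ?_
    filter_upwards [hle] with x hx
    simp [hx]
  rw [measureReal_congr hae, measureReal_prod_eq_add (T₁ := {p | p.1 = p.2 ∧ p.2 ≤ t})
    (T₂ := {p | p.1 < p.2 ∧ p.2 ≤ t}) (fun p => by simp; omega)
    (fun p h₁ h₂ => by simp at h₁ h₂; omega) hA, hQ.measureReal_lt_le hγ hγ1 t hA]

end IsStrongMemorylessLaw

end StrongMemorylessLaw

/-- Theorem 3.5 (lattice version of Theorem 3.2): if `ζ̂` is a strong memoryless time for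
`(ζ, V)` with parameters `(γ, μ)` and `σ(t) = ℙ(ζ̂ ≤ t, ζ > t)`, then
(i)  `ℙ(ζ̂ ≤ s, 0 < ζ − ζ̂ ≤ u, V ∈ A) = ℙ(ζ̂ ≤ s, ζ̂ < ζ)(1 − (1−γ)^u)μ(A)`;
(ii) `ℙ(ζ̂ ≤ t, ζ̂ < ζ) = σ(t) + γ∑_{i=0}^{t−1} σ(i)`;
(iii) `ℙ(ζ̂ = ζ ≤ t, V ∈ A) = ℙ(ζ ≤ t, V ∈ A) − μ(A)γ∑_{i=0}^{t−1} σ(i)`. -/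
theorem stmt_12 {Ω : Type*} [MeasurableSpace Ω] (P : Measure Ω) [IsProbabilityMeasure P]
    {S : Type*} [MeasurableSpace S] (μ : Measure S) [IsProbabilityMeasure μ]
    (γ : ℝ) (hγ : 0 < γ) (hγ1 : γ ≤ 1)
    (ζ : Ω → ℕ) (V : Ω → S) (hζm : Measurable ζ) (hVm : Measurable V)
    (ζhat : Ω → ℕ) (hζhatm : Measurable ζhat)
    (hle : P {ω | ζhat ω ≤ ζ ω} = 1)
    (hcond : ∀ t : ℕ, 0 < P {ω | ζhat ω ≤ t ∧ t < ζ ω} →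
      Measure.map (fun ω => (ζ ω - t, V ω)) (P[|{ω | ζhat ω ≤ t ∧ t < ζ ω}]) =
        (geomν γ).prod μ)
    (σ : ℕ → ℝ) (hσdef : ∀ t : ℕ, σ t = (P {ω | ζhat ω ≤ t ∧ t < ζ ω}).toReal) :
    (∀ s u : ℕ, ∀ A : Set S, MeasurableSet A →
      P {ω | ζhat ω ≤ s ∧ ζhat ω < ζ ω ∧ ζ ω - ζhat ω ≤ u ∧ V ω ∈ A} =
        P {ω | ζhat ω ≤ s ∧ ζhat ω < ζ ω} *
          (ENNReal.ofReal (1 - (1 - γ) ^ u) * μ A)) ∧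
    (∀ t : ℕ,
      P {ω | ζhat ω ≤ t ∧ ζhat ω < ζ ω} =
        ENNReal.ofReal (σ t + γ * ∑ i ∈ Finset.range t, σ i)) ∧
    (∀ t : ℕ, ∀ A : Set S, MeasurableSet A →
      P {ω | ζhat ω = ζ ω ∧ ζ ω ≤ t ∧ V ω ∈ A} =
        P {ω | ζ ω ≤ t ∧ V ω ∈ A} -
          μ A * ENNReal.ofReal (γ * ∑ i ∈ Finset.range t, σ i)) := by
  have hX : Measurable fun ω => ((ζhat ω, ζ ω), V ω) := (hζhatm.prodMk hζm).prodMk hVm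
  have hQ := isStrongMemorylessLaw_map hζhatm hζm hVm hcond
  have hle' : ∀ᵐ x ∂(P.map fun ω => ((ζhat ω, ζ ω), V ω)), x.1.1 ≤ x.1.2 :=
    (ae_map_iff hX.aemeasurable (measurableSet_le measurable_fst.fst measurable_fst.snd)).2
      (ae_iff.2 ((prob_compl_eq_zero_iff (measurableSet_le hζhatm hζm)).2 hle))
  set Q := P.map fun ω => ((ζhat ω, ζ ω), V ω)
  have hlaw : ∀ (T : Set (ℕ × ℕ)) {A : Set S}, MeasurableSet A →
      Q.real (T ×ˢ A) = P.real {ω | (ζhat ω, ζ ω) ∈ T ∧ V ω ∈ A} := fun T A hA =>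
    map_measureReal_apply hX (MeasurableSet.of_discrete.prod hA)
  obtain rfl : σ = straddleMass Q := funext fun t => by
    rw [hσdef, straddleMass, hlaw _ .univ]; simp [measureReal_def]
  have hsum : ∀ t, 0 ≤ γ * ∑ i ∈ Finset.range t, straddleMass Q i := fun t =>
    mul_nonneg hγ.le (Finset.sum_nonneg fun i _ => measureReal_nonneg)
  have h2 := hQ.measureReal_le_lt hγ.le hγ1
  simp only [hlaw _ .univ, mem_ofPred_eq, mem_univ, and_true] at h2
  refine ⟨fun s u A hA => ?_, fun t => by rw [← ofReal_measureReal, h2], fun t A hA => ?_⟩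
  · have h1 := hQ.measureReal_le_lt_sub_le hγ.le hγ1 s u hA
    simp only [hlaw _ hA, hlaw _ .univ, mem_ofPred_eq, mem_univ, and_true, and_assoc] at h1
    have hc : 0 ≤ 1 - (1 - γ) ^ u := sub_nonneg.2 (pow_le_one₀ (by linarith) (by linarith))
    rw [← ofReal_measureReal, h1, ENNReal.ofReal_mul (mul_nonneg measureReal_nonneg hc),
      ENNReal.ofReal_mul measureReal_nonneg, ofReal_measureReal, ofReal_measureReal, mul_assoc]
  · have h3 := hQ.measureReal_le_eq_add hγ.le hγ1 hle' t hA
    simp only [hlaw _ hA, mem_ofPred_eq, and_assoc] at h3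
    refine ENNReal.eq_sub_of_add_eq (by finiteness) ?_
    rw [← ofReal_measureReal (μ := P), ← ofReal_measureReal (μ := P),
      ← ofReal_measureReal (μ := μ), ← ENNReal.ofReal_mul measureReal_nonneg,
      ← ENNReal.ofReal_add measureReal_nonneg (mul_nonneg measureReal_nonneg (hsum t)), h3,
      mul_comm]
end

section
/- Let ζ̂ be a nonnegative integer-valued random variable defined on the same probability space as (ζ,V) with ℙ(ζ̂ ≤ ζ) = 1, and suppose that for all s, u ∈ ℤ₊ and A ∈ 𝒮, ℙ(ζ̂ ≤ s, 0 < ζ − ζ̂ ≤ u, V ∈ A) = ℙ(ζ̂ ≤ s, ζ̂ < ζ)·(1 − (1−γ)^u)·μ(A). Then for every t ∈ ℤ₊ with ℙ(ζ̂ ≤ t, ζ > t) > 0, the conditional distribution of (ζ − t, V) given the event {ζ̂ ≤ t, ζ > t} equals ν_γ × μ. -/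
/-!
Differencing the factorisation in `u` (against the distribution function of `ν_γ`) and then in
`s` shows that `P(ζ̂ = j, ζ̂ < ζ, ζ - ζ̂ = d, V ∈ A) = P(ζ̂ = j, ζ̂ < ζ) ν_γ{d} μ(A)`.
On `{ζ̂ ≤ t < ζ}` the overshoot `ζ - t` equals `k` exactly when `ζ - ζ̂ = (t - ζ̂) + k`, and
memorylessness, `ν_γ{n + k} = (1 - γ)^n ν_γ{k}`, turns the law of `(ζ - t, V)` restricted to this
event into a constant multiple of `ν_γ ⊗ μ`; conditioning removes the constant.
-/

open MeasureTheory ProbabilityTheory Real Set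

open scoped ENNReal

section Geometric

variable {γ : ℝ}

lemma geomν_singleton (γ : ℝ) (k : ℕ) :
    geomν γ {k} = if k = 0 then 0 else ENNReal.ofReal (γ * (1 - γ) ^ (k - 1)) := by
  simp [geomν]

lemma geomν_singleton_add (hγ1 : γ ≤ 1) (n : ℕ) {k : ℕ} (hk : k ≠ 0) :
    geomν γ {n + k} = ENNReal.ofReal ((1 - γ) ^ n) * geomν γ {k} := by
  have : 0 ≤ 1 - γ := by linarith
  rw [geomν_singleton, geomν_singleton, if_neg (by omega), if_neg hk,
    ← ENNReal.ofReal_mul (by positivity), show n + k - 1 = n + (k - 1) by omega, pow_add]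
  ring_nf

lemma geomν_Iic (hγ : 0 ≤ γ) (hγ1 : γ ≤ 1) (u : ℕ) :
    geomν γ (Iic u) = ENNReal.ofReal (1 - (1 - γ) ^ u) := by
  induction u with
  | zero => simp [show Iic (0 : ℕ) = {0} by ext; simp, geomν_singleton]
  | succ u ih =>
    have hr : 0 ≤ 1 - γ := by linarith
    have hu : 0 ≤ 1 - (1 - γ) ^ u := sub_nonneg.mpr (pow_le_one₀ hr (by linarith))
    rw [show Iic (u + 1) = Iic u ∪ {u + 1} by ext; simp; omega,
      measure_union (by simp) (measurableSet_singleton _), ih, geomν_singleton, if_neg (by omega),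
      Nat.add_sub_cancel, ← ENNReal.ofReal_add hu (by positivity)]
    ring_nf

lemma isProbabilityMeasure_geomν (hγ : 0 < γ) (hγ1 : γ ≤ 1) :
    IsProbabilityMeasure (geomν γ) := by
  constructor
  have hr : 0 ≤ 1 - γ := by linarith
  rw [geomν, withDensity_apply _ MeasurableSet.univ, Measure.restrict_univ, lintegral_count,
    tsum_eq_zero_add' ENNReal.summable]
  simp only [Nat.add_sub_cancel, add_eq_zero, one_ne_zero, and_false, if_false, if_true,
    zero_add]
  simp_rw [ENNReal.ofReal_mul hγ.le, ENNReal.ofReal_pow hr, ENNReal.tsum_mul_left,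
    ENNReal.tsum_geometric]
  rw [← ENNReal.ofReal_one, ← ENNReal.ofReal_sub _ hr, sub_sub_cancel,
    ENNReal.mul_inv_cancel (ENNReal.ofReal_pos.mpr hγ).ne' ENNReal.ofReal_ne_top,
    ENNReal.ofReal_one]

end Geometric

lemma MeasureTheory.Measure.eq_prod_of_singleton_prod {α β : Type*} [MeasurableSpace α]
    [Countable α] [MeasurableSingletonClass α] [MeasurableSpace β] {ν : Measure (α × β)}
    {κ : Measure α} {μ : Measure β} [SigmaFinite κ] [SigmaFinite μ]
    (h : ∀ a A, MeasurableSet A → ν ({a} ×ˢ A) = κ {a} * μ A) : ν = κ.prod μ := by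
  refine (Measure.prod_eq fun s A _ hA => ?_).symm
  have hdisj : s.PairwiseDisjoint fun a => ({a} ×ˢ A : Set (α × β)) := fun a _ b _ hab =>
    disjoint_left.mpr fun p hpa hpb => hab ((mem_singleton_iff.mp hpa.1).symm.trans hpb.1)
  calc ν (s ×ˢ A) = ∑' a : s, ν ({(a : α)} ×ˢ A) := by
        rw [← measure_biUnion s.to_countable hdisj fun a _ => (measurableSet_singleton a).prod hA,
          ← iUnion₂_prod_const, biUnion_of_singleton]
    _ = ∑' a : s, κ {(a : α)} * μ A := by simp_rw [h _ A hA]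
    _ = κ s * μ A := by
        rw [ENNReal.tsum_mul_right, ← measure_biUnion (f := fun a => {a}) s.to_countable
          (fun a _ b _ hab => disjoint_singleton.mpr hab) fun a _ => measurableSet_singleton a,
          biUnion_of_singleton]

lemma measure_inter_preimage_singleton_eq_of_Iic {Ω : Type*} [MeasurableSpace Ω] {P : Measure Ω}
    [IsFiniteMeasure P] {f : Ω → ℕ} (hf : Measurable f) {B : Set Ω} {κ : Measure ℕ}
    {x : ℝ≥0∞} (h : ∀ n, P (B ∩ f ⁻¹' Iic n) = κ (Iic n) * x) (j : ℕ) :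
    P (B ∩ f ⁻¹' {j}) = κ {j} * x := by
  have hmap : (P.restrict B).map f = x • κ := Measure.ext_of_Iic _ _ fun n => by
    rw [Measure.map_apply hf measurableSet_Iic, Measure.restrict_apply (hf measurableSet_Iic),
      inter_comm, h, Measure.smul_apply, smul_eq_mul, mul_comm]
  have := congrArg (fun m : Measure ℕ => m {j}) hmap
  simp only [Measure.map_apply hf (measurableSet_singleton j),
    Measure.restrict_apply (hf (measurableSet_singleton j)), Measure.smul_apply,
    smul_eq_mul] at this
  rw [inter_comm, this, mul_comm]

lemma map_cond_eq_of_map_restrict_eq_smul {Ω X : Type*} [MeasurableSpace Ω] [MeasurableSpace X]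
    {P : Measure Ω} {E : Set Ω} (hE₀ : P E ≠ 0) (hE : P E ≠ ∞) {g : Ω → X} (hg : Measurable g)
    {ρ : Measure X} [IsProbabilityMeasure ρ] {c : ℝ≥0∞} (h : (P.restrict E).map g = c • ρ) :
    (P[|E]).map g = ρ := by
  have hc : c = P E := by
    simpa [Measure.map_apply hg MeasurableSet.univ] using congrArg (fun m => m univ) h.symm
  rw [ProbabilityTheory.cond, Measure.map_smul, h, smul_smul, hc, ENNReal.inv_mul_cancel hE₀ hE,
    one_smul]

section Excess

variable {Ω S : Type*} [MeasurableSpace Ω] [MeasurableSpace S] {P : Measure Ω}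
  {μ : Measure S} {γ : ℝ} {ζ ζhat : Ω → ℕ} {V : Ω → S}

lemma measure_le_excess_eq [IsFiniteMeasure P] (hγ : 0 ≤ γ) (hγ1 : γ ≤ 1)
    (hζm : Measurable ζ) (hζhatm : Measurable ζhat)
    (hfact : ∀ s u : ℕ, ∀ A : Set S, MeasurableSet A →
      P {ω | ζhat ω ≤ s ∧ ζhat ω < ζ ω ∧ ζ ω - ζhat ω ≤ u ∧ V ω ∈ A} =
        P {ω | ζhat ω ≤ s ∧ ζhat ω < ζ ω} * (ENNReal.ofReal (1 - (1 - γ) ^ u) * μ A))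
    (s d : ℕ) (A : Set S) (hA : MeasurableSet A) :
    P {ω | ζhat ω ≤ s ∧ ζhat ω < ζ ω ∧ ζ ω - ζhat ω = d ∧ V ω ∈ A} =
      P {ω | ζhat ω ≤ s ∧ ζhat ω < ζ ω} * (geomν γ {d} * μ A) := by
  have key := measure_inter_preimage_singleton_eq_of_Iic (P := P)
    (f := fun ω => ζ ω - ζhat ω) (by fun_prop) (B := {ω | ζhat ω ≤ s ∧ ζhat ω < ζ ω ∧ V ω ∈ A})
    (κ := geomν γ) (x := P {ω | ζhat ω ≤ s ∧ ζhat ω < ζ ω} * μ A) (fun u => by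
      rw [geomν_Iic hγ hγ1, mul_left_comm, ← hfact s u A hA]
      congr 1; ext ω
      simp only [mem_inter_iff, mem_ofPred_eq, mem_preimage, mem_Iic]; tauto) d
  rw [mul_left_comm, ← key]
  congr 1; ext ω
  simp only [mem_inter_iff, mem_ofPred_eq, mem_preimage, mem_singleton_iff]; tauto

lemma measure_eq_excess_eq [IsFiniteMeasure P] (hγ : 0 ≤ γ) (hγ1 : γ ≤ 1)
    (hζm : Measurable ζ) (hζhatm : Measurable ζhat)
    (hfact : ∀ s u : ℕ, ∀ A : Set S, MeasurableSet A →
      P {ω | ζhat ω ≤ s ∧ ζhat ω < ζ ω ∧ ζ ω - ζhat ω ≤ u ∧ V ω ∈ A} =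
        P {ω | ζhat ω ≤ s ∧ ζhat ω < ζ ω} * (ENNReal.ofReal (1 - (1 - γ) ^ u) * μ A))
    (j d : ℕ) (A : Set S) (hA : MeasurableSet A) :
    P {ω | ζhat ω = j ∧ ζhat ω < ζ ω ∧ ζ ω - ζhat ω = d ∧ V ω ∈ A} =
      P {ω | ζhat ω = j ∧ ζhat ω < ζ ω} * (geomν γ {d} * μ A) := by
  have hlaw : ∀ T : Set ℕ, MeasurableSet T →
      (P.restrict {ω | ζhat ω < ζ ω}).map ζhat T = P {ω | ζhat ω ∈ T ∧ ζhat ω < ζ ω} :=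
    fun T hT => by rw [Measure.map_apply hζhatm hT, Measure.restrict_apply (hζhatm hT)]; rfl
  have key := measure_inter_preimage_singleton_eq_of_Iic (P := P) hζhatm
    (B := {ω | ζhat ω < ζ ω ∧ ζ ω - ζhat ω = d ∧ V ω ∈ A})
    (κ := (P.restrict {ω | ζhat ω < ζ ω}).map ζhat) (x := geomν γ {d} * μ A) (fun n => by
      rw [hlaw _ measurableSet_Iic, show {ω | ζhat ω ∈ Iic n ∧ ζhat ω < ζ ω} =
        {ω | ζhat ω ≤ n ∧ ζhat ω < ζ ω} from rfl,
        ← measure_le_excess_eq hγ hγ1 hζm hζhatm hfact n d A hA]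
      congr 1; ext ω
      simp only [mem_inter_iff, mem_ofPred_eq, mem_preimage, mem_Iic]; tauto) j
  rw [hlaw _ (measurableSet_singleton j), show {ω | ζhat ω ∈ ({j} : Set ℕ) ∧ ζhat ω < ζ ω} =
    {ω | ζhat ω = j ∧ ζhat ω < ζ ω} from rfl] at key
  rw [← key]
  congr 1; ext ω
  simp only [mem_inter_iff, mem_ofPred_eq, mem_preimage, mem_singleton_iff]; tauto

lemma measure_overshoot_eq (hγ1 : γ ≤ 1) (hζm : Measurable ζ) (hζhatm : Measurable ζhat)
    (hVm : Measurable V)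
    (hexcess : ∀ j d : ℕ, ∀ A : Set S, MeasurableSet A →
      P {ω | ζhat ω = j ∧ ζhat ω < ζ ω ∧ ζ ω - ζhat ω = d ∧ V ω ∈ A} =
        P {ω | ζhat ω = j ∧ ζhat ω < ζ ω} * (geomν γ {d} * μ A))
    (t k : ℕ) {A : Set S} (hA : MeasurableSet A) :
    P ({ω | ζhat ω ≤ t ∧ t < ζ ω} ∩ (fun ω => (ζ ω - t, V ω)) ⁻¹' ({k} ×ˢ A)) =
      (∑ j ∈ Finset.range (t + 1),
        P {ω | ζhat ω = j ∧ ζhat ω < ζ ω} * ENNReal.ofReal ((1 - γ) ^ (t - j))) *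
        (geomν γ {k} * μ A) := by
  rcases eq_or_ne k 0 with rfl | hk
  · have hempty :
        {ω | ζhat ω ≤ t ∧ t < ζ ω} ∩ (fun ω => (ζ ω - t, V ω)) ⁻¹' ({0} ×ˢ A) = ∅ := by
      ext ω
      simp only [mem_inter_iff, mem_ofPred_eq, mem_preimage, mem_prod, mem_singleton_iff,
        mem_empty_iff_false, iff_false]
      omega
    simp [hempty, geomν_singleton]
  have hunion : {ω | ζhat ω ≤ t ∧ t < ζ ω} ∩ (fun ω => (ζ ω - t, V ω)) ⁻¹' ({k} ×ˢ A) =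
      ⋃ j ∈ Finset.range (t + 1),
        {ω | ζhat ω = j ∧ ζhat ω < ζ ω ∧ ζ ω - ζhat ω = t - j + k ∧ V ω ∈ A} := by
    ext ω
    simp only [mem_inter_iff, mem_ofPred_eq, mem_preimage, mem_prod, mem_singleton_iff,
      mem_iUnion, Finset.mem_range, exists_prop]
    constructor
    · rintro ⟨⟨hle, hlt⟩, heq, hV⟩
      exact ⟨ζhat ω, by omega, rfl, by omega, by omega, hV⟩
    · rintro ⟨j, hj, rfl, hlt, heq, hV⟩
      exact ⟨⟨by omega, by omega⟩, by omega, hV⟩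
  have hdisj : (↑(Finset.range (t + 1)) : Set ℕ).PairwiseDisjoint fun j =>
      {ω | ζhat ω = j ∧ ζhat ω < ζ ω ∧ ζ ω - ζhat ω = t - j + k ∧ V ω ∈ A} :=
    fun i _ j _ hij => disjoint_left.mpr fun ω hi hj => hij (hi.1.symm.trans hj.1)
  rw [hunion, measure_biUnion_finset hdisj fun j _ => by measurability, Finset.sum_mul]
  refine Finset.sum_congr rfl fun j _ => ?_
  rw [hexcess _ _ _ hA, geomν_singleton_add hγ1 _ hk]
  ring

lemma exists_map_restrict_overshoot_eq_smul_prod [IsFiniteMeasure P] [SigmaFinite μ]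
    (hγ : 0 < γ) (hγ1 : γ ≤ 1) (hζm : Measurable ζ) (hζhatm : Measurable ζhat)
    (hVm : Measurable V)
    (hexcess : ∀ j d : ℕ, ∀ A : Set S, MeasurableSet A →
      P {ω | ζhat ω = j ∧ ζhat ω < ζ ω ∧ ζ ω - ζhat ω = d ∧ V ω ∈ A} =
        P {ω | ζhat ω = j ∧ ζhat ω < ζ ω} * (geomν γ {d} * μ A))
    (t : ℕ) :
    ∃ c : ℝ≥0∞, (P.restrict {ω | ζhat ω ≤ t ∧ t < ζ ω}).map (fun ω => (ζ ω - t, V ω)) =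
      c • (geomν γ).prod μ := by
  have := isProbabilityMeasure_geomν hγ hγ1
  set c := ∑ j ∈ Finset.range (t + 1),
    P {ω | ζhat ω = j ∧ ζhat ω < ζ ω} * ENNReal.ofReal ((1 - γ) ^ (t - j))
  have := (geomν γ).smul_finite (c := c) <| ENNReal.sum_ne_top.mpr fun _ _ =>
    ENNReal.mul_ne_top (measure_ne_top _ _) ENNReal.ofReal_ne_top
  refine ⟨c, ?_⟩
  rw [← Measure.prod_smul_left]
  refine Measure.eq_prod_of_singleton_prod fun k A hA => ?_
  have hg : Measurable fun ω => (ζ ω - t, V ω) := by fun_prop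
  rw [Measure.map_apply hg ((measurableSet_singleton k).prod hA),
    Measure.restrict_apply (hg ((measurableSet_singleton k).prod hA)), inter_comm,
    measure_overshoot_eq hγ1 hζm hζhatm hVm hexcess t k hA, Measure.smul_apply, smul_eq_mul,
    mul_assoc]

end Excess

theorem stmt_16_general {Ω : Type*} [MeasurableSpace Ω] (P : Measure Ω) [IsProbabilityMeasure P]
    {S : Type*} [MeasurableSpace S] (μ : Measure S) [IsProbabilityMeasure μ]
    (γ : ℝ) (hγ : 0 < γ) (hγ1 : γ ≤ 1)
    (ζ : Ω → ℕ) (V : Ω → S) (hζm : Measurable ζ) (hVm : Measurable V)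
    (ζhat : Ω → ℕ) (hζhatm : Measurable ζhat)
    (hfact : ∀ s u : ℕ, ∀ A : Set S, MeasurableSet A →
      P {ω | ζhat ω ≤ s ∧ ζhat ω < ζ ω ∧ ζ ω - ζhat ω ≤ u ∧ V ω ∈ A} =
        P {ω | ζhat ω ≤ s ∧ ζhat ω < ζ ω} *
          (ENNReal.ofReal (1 - (1 - γ) ^ u) * μ A)) :
    ∀ t : ℕ, 0 < P {ω | ζhat ω ≤ t ∧ t < ζ ω} →
      Measure.map (fun ω => (ζ ω - t, V ω)) (P[|{ω | ζhat ω ≤ t ∧ t < ζ ω}]) =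
        (geomν γ).prod μ := by
  intro t ht
  have := isProbabilityMeasure_geomν hγ hγ1
  obtain ⟨c, hc⟩ := exists_map_restrict_overshoot_eq_smul_prod hγ hγ1 hζm hζhatm hVm
    (measure_eq_excess_eq hγ.le hγ1 hζm hζhatm hfact) t
  exact map_cond_eq_of_map_restrict_eq_smul ht.ne' (measure_ne_top _ _) (by fun_prop) hc

/-- Theorem 3.5 (lattice converse part): if `ℙ(ζ̂ ≤ ζ) = 1` and
`ℙ(ζ̂ ≤ s, 0 < ζ − ζ̂ ≤ u, V ∈ A) = ℙ(ζ̂ ≤ s, ζ̂ < ζ)(1 − (1−γ)^u)μ(A)` for all `s, u, A`,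
then for every `t ∈ ℤ₊` with `ℙ(ζ̂ ≤ t, ζ > t) > 0` the conditional law of `(ζ − t, V)`
given `{ζ̂ ≤ t, ζ > t}` is `ν_γ × μ`. -/
theorem stmt_16 {Ω : Type*} [MeasurableSpace Ω] (P : Measure Ω) [IsProbabilityMeasure P]
    {S : Type*} [MeasurableSpace S] (μ : Measure S) [IsProbabilityMeasure μ]
    (γ : ℝ) (hγ : 0 < γ) (hγ1 : γ ≤ 1)
    (ζ : Ω → ℕ) (V : Ω → S) (hζm : Measurable ζ) (hVm : Measurable V)
    (ζhat : Ω → ℕ) (hζhatm : Measurable ζhat)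
    (hle : P {ω | ζhat ω ≤ ζ ω} = 1)
    (hfact : ∀ s u : ℕ, ∀ A : Set S, MeasurableSet A →
      P {ω | ζhat ω ≤ s ∧ ζhat ω < ζ ω ∧ ζ ω - ζhat ω ≤ u ∧ V ω ∈ A} =
        P {ω | ζhat ω ≤ s ∧ ζhat ω < ζ ω} *
          (ENNReal.ofReal (1 - (1 - γ) ^ u) * μ A)) :
    ∀ t : ℕ, 0 < P {ω | ζhat ω ≤ t ∧ t < ζ ω} →
      Measure.map (fun ω => (ζ ω - t, V ω)) (P[|{ω | ζhat ω ≤ t ∧ t < ζ ω}]) =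
        (geomν γ).prod μ :=
  stmt_16_general P μ γ hγ hγ1 ζ V hζm hVm ζhat hζhatm hfact
end
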